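/- arXiv:2212.00858 — 10 statements merged into one kernel-verified Lean document; each statement's English description precedes it below -/
import Mathlib

section
/- If G is a nilpotent group that is generated by finitely many elements, each of finite order, then G is finite. -/
open scoped commutatorElement

private lemma commutator_center_aux {G : Type*} [Group G] {g h z w : G}
    (hz : z ∈ Subgroup.center G) (hw : w ∈ Subgroup.center G) :
    ⁅g * z, h * w⁆ = ⁅g, h⁆ := by
  rw [Subgroup.mem_center_iff] at hz hw
  have sz : ∀ a X : G, z * (a * X) = a * (z * X) := fun a X => by
    rw [← mul_assoc, ← hz a, mul_assoc]
  have sw : ∀ a X : G, w * (a * X) = a * (w * X) := fun a X => by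
    rw [← mul_assoc, ← hw a, mul_assoc]
  simp only [commutatorElement_def, mul_inv_rev, mul_assoc]
  rw [sz h, sz w, mul_inv_cancel_left, sw g⁻¹, mul_inv_cancel_left]

private lemma finite_aux (G : Type*) [Group G] [Group.IsNilpotent G] :
    ∀ X : Finset G, (∀ x ∈ X, IsOfFinOrder x) →
      Subgroup.closure (X : Set G) = ⊤ → Finite G := by
  refine nilpotent_center_quotient_ind
    (P := fun G _ _ => ∀ X : Finset G, (∀ x ∈ X, IsOfFinOrder x) →
      Subgroup.closure (X : Set G) = ⊤ → Finite G) G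
    (fun G _ _ => fun _ _ _ => Finite.of_subsingleton) ?_
  intro G _ _ ih X hord hgen
  classical
  set π := QuotientGroup.mk' (Subgroup.center G) with hπ
  -- the quotient by the center is finite
  have hQ : Finite (G ⧸ Subgroup.center G) := by
    refine ih (X.image π) (fun y hy => ?_) ?_
    · obtain ⟨x, hx, rfl⟩ := Finset.mem_image.mp hy
      exact π.isOfFinOrder (hord x hx)
    · rw [Finset.coe_image, ← MonoidHom.map_closure, hgen, ← MonoidHom.range_eq_map,
        MonoidHom.range_eq_top]
      exact QuotientGroup.mk'_surjective _
  -- the set of commutators is finite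
  have hcs : Finite (commutatorSet G) := by
    have hsub : commutatorSet G ⊆ Set.range
        (fun p : (G ⧸ Subgroup.center G) × (G ⧸ Subgroup.center G) =>
          ⁅p.1.out, p.2.out⁆) := by
      rintro - ⟨g, h, rfl⟩
      refine ⟨(π g, π h), ?_⟩
      have hg : (π g).out * ((π g).out⁻¹ * g) = g := by group
      have hh : (π h).out * ((π h).out⁻¹ * h) = h := by group
      have hg' : (π g).out⁻¹ * g ∈ Subgroup.center G :=
        QuotientGroup.eq.mp (QuotientGroup.out_eq' (π g))
      have hh' : (π h).out⁻¹ * h ∈ Subgroup.center G :=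
        QuotientGroup.eq.mp (QuotientGroup.out_eq' (π h))
      simp only
      conv_rhs => rw [← hg, ← hh]
      exact (commutator_center_aux hg' hh').symm
    exact ((Set.finite_range _).subset hsub).to_subtype
  -- hence the commutator subgroup is finite (a theorem of Schur)
  have hcomm : Finite (commutator G) := inferInstance
  -- the abelianization is finitely generated and torsion, hence finite
  haveI hfg : Group.FG G := Group.fg_iff.mpr ⟨X, hgen, X.finite_toSet⟩
  have hsur : Function.Surjective (Abelianization.of : G →* Abelianization G) :=
    fun y => Quotient.inductionOn' y fun g => ⟨g, rfl⟩
  haveI : Group.FG (Abelianization G) := Group.fg_of_surjective hsur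
  have hab : Finite (Abelianization G) := by
    refine CommGroup.finite_of_fg_torsion _ ?_
    intro g
    have htop : CommGroup.torsion (Abelianization G) = ⊤ := by
      rw [eq_top_iff, ← Subgroup.map_top_of_surjective Abelianization.of hsur, ← hgen,
        MonoidHom.map_closure, Subgroup.closure_le]
      rintro - ⟨x, hx, rfl⟩
      exact Abelianization.of.isOfFinOrder (hord x hx)
    have : g ∈ CommGroup.torsion (Abelianization G) := htop ▸ Subgroup.mem_top g
    exact this
  have : Finite (G ⧸ commutator G) := hab
  exact (Subgroup.finite_iff_finite_and_finiteIndex (commutator G)).mpr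
    ⟨hcomm, Subgroup.finiteIndex_of_finite_quotient⟩

/-- If `G` is a nilpotent group generated by finitely many elements, each of
finite order, then `G` is finite. -/
theorem stmt_0 (G : Type*) [Group G] [Group.IsNilpotent G]
    (X : Finset G) (hord : ∀ x ∈ X, IsOfFinOrder x)
    (hgen : Subgroup.closure (X : Set G) = ⊤) :
    Finite G := by
  exact finite_aux G X hord hgen
end

section
/- For every prime p and every natural number ℓ, there exists a finite group P such that P is a p-group, |P| ≥ ℓ, and P is generated by two elements, each of order exactly p. -/
open SemidirectProduct Multiplicative

/-- Cyclic shift of a vector indexed by `ZMod p`, as an additive automorphism. -/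
def shiftAut (p q : ℕ) (k : ZMod p) : (ZMod p → ZMod q) ≃+ (ZMod p → ZMod q) where
  toFun v := fun j => v (j + k)
  invFun v := fun j => v (j - k)
  left_inv v := funext fun j => by show v (j - k + k) = v j; rw [sub_add_cancel]
  right_inv v := funext fun j => by show v (j + k - k) = v j; rw [add_sub_cancel_right]
  map_add' v w := rfl

@[simp] lemma shiftAut_apply (p q : ℕ) (k : ZMod p) (v : ZMod p → ZMod q) (j : ZMod p) :
    shiftAut p q k v j = v (j + k) := rfl

/-- The shift action of `Multiplicative (ZMod p)` on `Multiplicative (ZMod p → ZMod q)`. -/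
def shiftHom (p q : ℕ) :
    Multiplicative (ZMod p) →* MulAut (Multiplicative (ZMod p → ZMod q)) where
  toFun k := AddEquiv.toMultiplicative (shiftAut p q (toAdd k))
  map_one' := by
    ext x : 1
    show ofAdd (shiftAut p q (toAdd (1 : Multiplicative (ZMod p))) (toAdd x)) = x
    simp only [toAdd_one]
    refine congrArg ofAdd (funext fun j => ?_)
    show toAdd x (j + 0) = toAdd x j
    rw [add_zero]
  map_mul' k l := by
    ext x : 1
    show ofAdd (shiftAut p q (toAdd (k * l)) (toAdd x))
        = ofAdd (shiftAut p q (toAdd k) (shiftAut p q (toAdd l) (toAdd x)))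
    refine congrArg ofAdd (funext fun j => ?_)
    simp [toAdd_mul, add_assoc]

/-- For every prime `p` and every natural number `ℓ`, there exists a finite
group `P` which is a `p`-group, has at least `ℓ` elements, and is generated by
two elements, each of order exactly `p`. -/
theorem stmt_1 (p : ℕ) (hp : p.Prime) (ℓ : ℕ) :
    ∃ (P : Type) (_ : Group P) (_ : Fintype P),
      IsPGroup p P ∧ ℓ ≤ Fintype.card P ∧
      ∃ a b : P, orderOf a = p ∧ orderOf b = p ∧
        Subgroup.closure ({a, b} : Set P) = ⊤ := by
  haveI : Fact p.Prime := ⟨hp⟩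
  haveI : Fact (1 < p) := ⟨hp.one_lt⟩
  haveI : NeZero p := ⟨hp.ne_zero⟩
  set q : ℕ := p ^ (ℓ + 1) with hq
  haveI : NeZero q := ⟨pow_ne_zero _ hp.ne_zero⟩
  haveI : Fact (1 < q) := ⟨Nat.one_lt_pow (Nat.succ_ne_zero ℓ) hp.one_lt⟩
  -- the ambient group
  set φ := shiftHom p q with hφ
  let G := Multiplicative (ZMod p → ZMod q) ⋊[φ] Multiplicative (ZMod p)
  haveI : Fintype G :=
    Fintype.ofEquiv (Multiplicative (ZMod p → ZMod q) × Multiplicative (ZMod p))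
      { toFun := fun x => ⟨x.1, x.2⟩
        invFun := fun g => (g.left, g.right)
        left_inv := fun x => rfl
        right_inv := fun g => rfl }
  -- the two generators
  let w : ZMod p → ZMod q := fun j => (if j = 0 then 1 else 0) - (if j = 1 then 1 else 0)
  have hw0 : w 0 = 1 := by
    have h01 : (0 : ZMod p) ≠ 1 := zero_ne_one
    simp [w, h01]
  have hwsum : ∀ j : ZMod p, (∑ t : ZMod p, w (j + t)) = 0 := by
    intro j
    have : (∑ t : ZMod p, w (j + t)) = ∑ t : ZMod p, w t :=
      Fintype.sum_equiv (Equiv.addLeft j) _ _ fun t => rfl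
    rw [this]
    have h1 : (∑ t : ZMod p, (if t = (0 : ZMod p) then (1 : ZMod q) else 0)) = 1 := by
      simp
    have h2 : (∑ t : ZMod p, (if t = (1 : ZMod p) then (1 : ZMod q) else 0)) = 1 := by
      simp
    simp only [w, Finset.sum_sub_distrib, h1, h2, sub_self]
  let a : G := inr (ofAdd (1 : ZMod p))
  let b : G := ⟨ofAdd w, ofAdd (1 : ZMod p)⟩
  -- power formula for b
  have hφ_apply : ∀ (k : ZMod p) (v : ZMod p → ZMod q),
      φ (ofAdd k) (ofAdd v) = ofAdd (fun j => v (j + k)) := fun k v => rfl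
  have hbpow : ∀ k : ℕ,
      b ^ k = ⟨ofAdd (fun j => ∑ i ∈ Finset.range k, w (j + (i : ZMod p))),
        ofAdd ((k : ZMod p))⟩ := by
    intro k
    induction k with
    | zero =>
      ext : 1
      · show (1 : Multiplicative (ZMod p → ZMod q)) = _
        refine congrArg ofAdd (funext fun j => ?_)
        simp
      · show (1 : Multiplicative (ZMod p)) = _
        simp
    | succ k ih =>
      rw [pow_succ, ih]
      ext : 1
      · show (ofAdd (fun j => ∑ i ∈ Finset.range k, w (j + (i : ZMod p))) *
          φ (ofAdd ((k : ZMod p))) (ofAdd w) : Multiplicative (ZMod p → ZMod q)) = _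
        rw [hφ_apply]
        refine congrArg ofAdd (funext fun j => ?_)
        show (∑ i ∈ Finset.range k, w (j + (i : ZMod p))) + w (j + (k : ZMod p)) = _
        rw [Finset.sum_range_succ]
      · show (ofAdd ((k : ZMod p)) * ofAdd (1 : ZMod p) : Multiplicative (ZMod p)) = _
        refine congrArg ofAdd ?_
        push_cast
        rfl
  -- order of a is p
  have hA_pow : a ^ p = 1 := by
    have : a ^ p = inr ((ofAdd (1 : ZMod p)) ^ p) := (map_pow inr _ p).symm
    rw [this]
    have : ((ofAdd (1 : ZMod p)) ^ p) = ofAdd ((p : ℕ) • (1 : ZMod p)) := by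
      rw [ofAdd_nsmul]
    rw [this]
    simp [ZMod.natCast_self]
  have hA_ne : a ≠ 1 := by
    simp only [a, ne_eq, ← map_one (inr (φ := φ))]
    intro h
    have := inr_injective (φ := φ) h
    rw [ofAdd_eq_one] at this
    exact one_ne_zero this
  have ha_ord : orderOf a = p := orderOf_eq_prime hA_pow hA_ne
  -- order of b is p
  have hB_pow : b ^ p = 1 := by
    rw [hbpow p]
    ext : 1
    · show ofAdd _ = (1 : Multiplicative (ZMod p → ZMod q))
      rw [← ofAdd_zero]
      refine congrArg ofAdd (funext fun j => ?_)
      show (∑ i ∈ Finset.range p, w (j + (i : ZMod p))) = 0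
      have hbij : ∑ i ∈ Finset.range p, w (j + (i : ZMod p)) = ∑ t : ZMod p, w (j + t) := by
        refine Finset.sum_nbij' (fun i => (i : ZMod p)) (fun t => t.val) ?_ ?_ ?_ ?_ ?_
        · intro i _; exact Finset.mem_univ _
        · intro t _; exact Finset.mem_range.2 (ZMod.val_lt t)
        · intro i hi; exact ZMod.val_cast_of_lt (Finset.mem_range.1 hi)
        · intro t _; exact ZMod.natCast_rightInverse t
        · intro i _; rfl
      rw [hbij, hwsum j]
    · show ofAdd ((p : ZMod p)) = (1 : Multiplicative (ZMod p))
      simp [ZMod.natCast_self]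
  have hB_ne : b ≠ 1 := by
    intro h
    have : (b.right) = (1 : G).right := by rw [h]
    simp only [b] at this
    rw [show (1 : G).right = 1 from rfl, ofAdd_eq_one] at this
    exact one_ne_zero this
  have hb_ord : orderOf b = p := orderOf_eq_prime hB_pow hB_ne
  -- the subgroup generated by a and b
  set P : Subgroup G := Subgroup.closure {a, b} with hP
  haveI : Fintype P := Fintype.ofFinite _
  have haP : a ∈ P := Subgroup.subset_closure (by simp)
  have hbP : b ∈ P := Subgroup.subset_closure (by simp)
  -- G is a p-group
  have hcard : Fintype.card G = p ^ ((ℓ + 1) * Fintype.card (ZMod p) + 1) := by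
    have e : G ≃ (Multiplicative (ZMod p → ZMod q) × Multiplicative (ZMod p)) :=
      { toFun := fun g => (g.left, g.right)
        invFun := fun x => ⟨x.1, x.2⟩
        left_inv := fun g => rfl
        right_inv := fun x => rfl }
    rw [Fintype.card_congr e, Fintype.card_prod]
    have h1 : Fintype.card (Multiplicative (ZMod p → ZMod q))
        = q ^ Fintype.card (ZMod p) := by
      rw [Fintype.card_multiplicative, Fintype.card_fun, ZMod.card]
    have h2 : Fintype.card (Multiplicative (ZMod p)) = p := by
      rw [Fintype.card_multiplicative, ZMod.card]
    rw [h1, h2, hq, ← pow_mul, ← pow_succ]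
  have hGp : IsPGroup p G :=
    IsPGroup.of_card (n := (ℓ + 1) * Fintype.card (ZMod p) + 1)
      (by rw [Nat.card_eq_fintype_card, hcard])
  -- b * a⁻¹ = inl (ofAdd w)
  have hba : b * a⁻¹ = inl (ofAdd w) := by
    ext : 1
    · show b.left * φ b.right a⁻¹.left = (inl (ofAdd w) : G).left
      have h1 : a⁻¹.left = (1 : Multiplicative (ZMod p → ZMod q)) := by
        rw [SemidirectProduct.inv_left]
        show φ (inr (ofAdd (1 : ZMod p)) : G).right⁻¹ (inr (ofAdd (1 : ZMod p)) : G).left⁻¹ = 1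
        rw [SemidirectProduct.left_inr, inv_one, map_one]
      rw [h1, map_one, mul_one]
      rfl
    · show b.right * a⁻¹.right = 1
      rw [SemidirectProduct.inv_right]
      show ofAdd (1 : ZMod p) * (inr (ofAdd (1 : ZMod p)) : G).right⁻¹ = 1
      rw [SemidirectProduct.right_inr, mul_inv_cancel]
  -- cardinality bound: an injection from ZMod q into P
  have hinj : Function.Injective (fun c : ZMod q =>
      (⟨(b * a⁻¹) ^ (c.val), pow_mem (mul_mem hbP (inv_mem haP)) _⟩ : P)) := by
    have key : ∀ n : ℕ, (b * a⁻¹) ^ n = inl (ofAdd (n • w)) := by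
      intro n
      rw [hba, ofAdd_nsmul, map_pow]
    intro c c' h
    have h' : (b * a⁻¹) ^ c.val = (b * a⁻¹) ^ c'.val := congrArg Subtype.val h
    rw [key, key] at h'
    have h'' := Multiplicative.ofAdd.injective (inl_injective h')
    have h4 : (c.val • w) 0 = (c'.val • w) 0 := by rw [h'']
    simp only [Pi.smul_apply, hw0, nsmul_eq_mul, mul_one] at h4
    have : c.val = c'.val := by
      have := congrArg ZMod.val h4
      rwa [ZMod.val_cast_of_lt (ZMod.val_lt c), ZMod.val_cast_of_lt (ZMod.val_lt c')] at this
    exact ZMod.val_injective q this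
  have hcardP : ℓ ≤ Fintype.card P := by
    have h1 : Fintype.card (ZMod q) ≤ Fintype.card P := Fintype.card_le_of_injective _ hinj
    have h2 : ℓ ≤ Fintype.card (ZMod q) := by
      rw [ZMod.card, hq]
      calc ℓ ≤ p ^ ℓ := (Nat.lt_pow_self hp.one_lt (n := ℓ)).le
        _ ≤ p ^ (ℓ + 1) := Nat.pow_le_pow_right hp.pos (Nat.le_succ ℓ)
    exact h2.trans h1
  -- assemble
  refine ⟨P, inferInstance, inferInstance, hGp.to_subgroup P, hcardP,
    ⟨a, haP⟩, ⟨b, hbP⟩, ?_, ?_, ?_⟩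
  · exact (orderOf_injective P.subtype P.subtype_injective ⟨a, haP⟩).symm.trans ha_ord
  · exact (orderOf_injective P.subtype P.subtype_injective ⟨b, hbP⟩).symm.trans hb_ord
  · have key := Subgroup.closure_closure_coe_preimage (k := ({a, b} : Set G))
    have hset : (((↑) : Subgroup.closure ({a, b} : Set G) → G) ⁻¹' {a, b})
        = ({⟨a, haP⟩, ⟨b, hbP⟩} : Set P) := by
      ext x
      simp only [Set.mem_preimage, Set.mem_insert_iff, Set.mem_singleton_iff]
      constructor
      · rintro (h | h)
        · left; exact Subtype.ext h
        · right; exact Subtype.ext h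
      · rintro (h | h)
        · left; exact congrArg Subtype.val h
        · right; exact congrArg Subtype.val h
    rw [← hset]
    exact key
end

section
/- For every prime p and every n ≥ 1, there exists a finite group of order exactly p^(n·(p−1)² + 2) that is generated by two elements, each of order exactly p. -/
/-!
Let `B = (ZMod (p ^ n))[x, y] / (Φ_p(x), Φ_p(y))`, a free `ZMod (p ^ n)`-module of rank `(p - 1)²`
(the quotient `G'/N` of the paper). Because `1 + x + ⋯ + x ^ (p - 1) = 0`, the truncated geometric
sums `S_x(k) = 1 + x + ⋯ + x ^ (k - 1)` only depend on `k : ZMod p` and satisfy the cocycle identity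
`S_x(k + l) = S_x(k) + x ^ k * S_x(l)`. This makes
`(u, v, w) * (u', v', w') = (u + u', v + v', w' + x ^ u' * y ^ v' * w + y ^ v' * S_x(u') * S_y(v))`
a group law on `ZMod p × ZMod p × B`, of order `p ^ 2 * |B|`. In it `a = (1, 0, 0)` and
`b = (0, 1, 0)` have order `p`, conjugation by `a` and `b` multiplies `B` by `x` and `y`, and the
commutator of `a` and `b` is `(0, 0, 1)`. As `x` and `y` generate `B` as a ring, the subgroup
generated by `a` and `b` contains `B`, hence is everything.
-/

open Finset Polynomial

theorem pow_eq_one_of_geom_sum_eq_zero {R : Type*} [Ring R] {x : R} {p : ℕ}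
    (hx : ∑ i ∈ range p, x ^ i = 0) : x ^ p = 1 := by
  rw [← sub_eq_zero, ← geom_sum_mul, hx, zero_mul]

theorem geom_sum_mod_of_geom_sum_eq_zero {R : Type*} [Semiring R] {x : R} {p : ℕ}
    (hx : ∑ i ∈ range p, x ^ i = 0) (N : ℕ) :
    ∑ i ∈ range (N % p), x ^ i = ∑ i ∈ range N, x ^ i := by
  conv_rhs => rw [← Nat.mod_add_div N p]
  induction N / p with
  | zero => rw [mul_zero, add_zero]
  | succ q ih => rw [mul_add_one, ← add_assoc, sum_range_add, ih]; simp [pow_add, ← mul_sum, hx]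

section ZModExponent

variable {R : Type*} [CommRing R] {p : ℕ} {x : R}

def geomSumZMod (x : R) (k : ZMod p) : R := ∑ i ∈ range k.val, x ^ i

@[simp] theorem geomSumZMod_zero : geomSumZMod x (0 : ZMod p) = 0 := by
  simp [geomSumZMod]

@[simp] theorem geomSumZMod_one [Fact (1 < p)] : geomSumZMod x (1 : ZMod p) = 1 := by
  simp [geomSumZMod, ZMod.val_one]

variable [NeZero p]

theorem pow_val_add (hx : ∑ i ∈ range p, x ^ i = 0) (k l : ZMod p) :
    x ^ (k + l).val = x ^ k.val * x ^ l.val := by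
  rw [ZMod.val_add, ← pow_eq_pow_mod _ (pow_eq_one_of_geom_sum_eq_zero hx), pow_add]

theorem pow_val_mul_pow_val_neg (hx : ∑ i ∈ range p, x ^ i = 0) (k : ZMod p) :
    x ^ k.val * x ^ (-k).val = 1 := by
  rw [← pow_val_add hx, add_neg_cancel, ZMod.val_zero, pow_zero]

theorem geomSumZMod_add (hx : ∑ i ∈ range p, x ^ i = 0) (k l : ZMod p) :
    geomSumZMod x (k + l) = geomSumZMod x k + x ^ k.val * geomSumZMod x l := by
  simp only [geomSumZMod, ZMod.val_add, geom_sum_mod_of_geom_sum_eq_zero hx, sum_range_add,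
    mul_sum, pow_add]

end ZModExponent

theorem ZMod.ofAdd_eq_ofAdd_one_pow_val {p : ℕ} [NeZero p] (k : ZMod p) :
    Multiplicative.ofAdd k = Multiplicative.ofAdd 1 ^ k.val := by
  rw [← ofAdd_nsmul, nsmul_one, ZMod.natCast_zmod_val]

theorem ZMod.subringClosure_empty_eq_top (m : ℕ) : Subring.closure (∅ : Set (ZMod m)) = ⊤ := by
  refine (Subring.eq_top_iff' _).mpr fun r => ?_
  rw [← ZMod.intCast_zmod_cast r]
  exact intCast_mem _ _

theorem AddSubgroup.eq_top_of_one_mem_of_mul_mem {R : Type*} [Ring R] {s : Set R}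
    (hs : Subring.closure s = ⊤) (S : AddSubgroup R) (one_mem : 1 ∈ S)
    (mul_mem : ∀ a ∈ s, ∀ m ∈ S, a * m ∈ S) : S = ⊤ := by
  have key : ∀ c ∈ Subring.closure s, ∀ m ∈ S, c * m ∈ S := by
    intro c hc
    induction hc using Subring.closure_induction with
    | mem a ha => exact mul_mem a ha
    | zero => simp
    | one => simp
    | add a b _ _ ha hb => intro m hm; rw [add_mul]; exact S.add_mem (ha m hm) (hb m hm)
    | neg a _ ha => intro m hm; rw [neg_mul]; exact S.neg_mem (ha m hm)
    | mul a b _ _ ha hb => intro m hm; rw [mul_assoc]; exact ha _ (hb m hm)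
  refine (eq_top_iff' S).mpr fun c => ?_
  simpa using key c (hs ▸ Subring.mem_top c) 1 one_mem

namespace AdjoinRoot

variable {R : Type*} [CommRing R]

theorem natCard_of_monic {f : R[X]} (hf : f.Monic) :
    Nat.card (AdjoinRoot f) = Nat.card R ^ f.natDegree := by
  rw [Nat.card_congr (powerBasis' hf).basis.equivFun.toEquiv, Nat.card_fun, Nat.card_fin,
    powerBasis'_dim]

theorem natCard_cyclotomic (p : ℕ) :
    Nat.card (AdjoinRoot (cyclotomic p R)) = Nat.card R ^ p.totient := by
  cases subsingleton_or_nontrivial R with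
  | inl _ =>
    have : Subsingleton (AdjoinRoot (cyclotomic p R)) := mk_surjective.subsingleton
    rw [Nat.card_of_subsingleton (0 : R), one_pow, Nat.card_of_subsingleton (root _)]
  | inr _ => rw [natCard_of_monic (cyclotomic.monic p R), natDegree_cyclotomic]

instance [Finite R] (p : ℕ) : Finite (AdjoinRoot (cyclotomic p R)) :=
  have := (cyclotomic.monic p R).finite_adjoinRoot
  Module.finite_of_finite R

theorem geom_sum_root_cyclotomic (p : ℕ) [Fact p.Prime] :
    ∑ i ∈ range p, root (cyclotomic p R) ^ i = 0 := by
  simpa [cyclotomic_prime, eval₂_finsetSum] using eval₂_root (cyclotomic p R)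

theorem subringClosure_insert_root_image_eq_top {f : R[X]} {s : Set R}
    (hs : Subring.closure s = ⊤) : Subring.closure (insert (root f) (of f '' s)) = ⊤ := by
  have h := congrArg Subalgebra.toSubring (adjoinRoot_eq_top (f := f))
  rw [Algebra.adjoin_eq_ring_closure, Algebra.top_toSubring] at h
  rw [eq_top_iff, ← h, Subring.closure_le, Set.union_subset_iff]
  refine ⟨?_, Set.singleton_subset_iff.mpr (Subring.subset_closure (Set.mem_insert _ _))⟩
  rintro _ ⟨r, rfl⟩
  have hr : of f r ∈ Subring.closure (of f '' s) := by
    rw [← RingHom.map_closure, hs]; exact ⟨r, trivial, rfl⟩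
  exact Subring.closure_mono (Set.subset_insert _ _) hr

end AdjoinRoot

@[ext]
structure CocycleExt (p : ℕ) {B : Type*} [CommRing B] (x y : B) where
  u : ZMod p
  v : ZMod p
  w : B

namespace CocycleExt

variable {p : ℕ} {B : Type*} [CommRing B] {x y : B}

instance : One (CocycleExt p x y) := ⟨⟨0, 0, 0⟩⟩

instance : Mul (CocycleExt p x y) :=
  ⟨fun g h => ⟨g.u + h.u, g.v + h.v,
    h.w + x ^ h.u.val * y ^ h.v.val * g.w + y ^ h.v.val * geomSumZMod x h.u * geomSumZMod y g.v⟩⟩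

instance : Inv (CocycleExt p x y) :=
  ⟨fun g => ⟨-g.u, -g.v,
    -(x ^ (-g.u).val * (y ^ (-g.v).val * g.w + geomSumZMod x g.u * geomSumZMod y (-g.v)))⟩⟩

@[simp] theorem one_def : (1 : CocycleExt p x y) = ⟨0, 0, 0⟩ := rfl

@[simp] theorem mul_def (g h : CocycleExt p x y) : g * h = ⟨g.u + h.u, g.v + h.v,
    h.w + x ^ h.u.val * y ^ h.v.val * g.w + y ^ h.v.val * geomSumZMod x h.u * geomSumZMod y g.v⟩ :=
  rfl

theorem inv_def (g : CocycleExt p x y) : g⁻¹ = ⟨-g.u, -g.v,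
    -(x ^ (-g.u).val * (y ^ (-g.v).val * g.w + geomSumZMod x g.u * geomSumZMod y (-g.v)))⟩ :=
  rfl

def equivProd : CocycleExt p x y ≃ ZMod p × ZMod p × B where
  toFun g := (g.u, g.v, g.w)
  invFun t := ⟨t.1, t.2.1, t.2.2⟩

theorem natCard : Nat.card (CocycleExt p x y) = p ^ 2 * Nat.card B := by
  rw [Nat.card_congr equivProd, Nat.card_prod, Nat.card_prod, Nat.card_zmod, ← mul_assoc, sq]

instance [NeZero p] [Finite B] : Finite (CocycleExt p x y) := .of_equiv _ equivProd.symm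

variable [NeZero p] [hx : Fact (∑ i ∈ range p, x ^ i = 0)] [hy : Fact (∑ i ∈ range p, y ^ i = 0)]

instance : Group (CocycleExt p x y) where
  mul_assoc a b c := by
    ext
    · exact add_assoc ..
    · exact add_assoc ..
    · have hcomm : geomSumZMod x b.u + x ^ b.u.val * geomSumZMod x c.u =
          geomSumZMod x c.u + x ^ c.u.val * geomSumZMod x b.u := by
        rw [← geomSumZMod_add hx.out, ← geomSumZMod_add hx.out, add_comm]
      simp only [mul_def, add_comm a.v b.v, geomSumZMod_add hy.out b.v a.v,
        pow_val_add hx.out, pow_val_add hy.out, geomSumZMod_add hx.out b.u c.u]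
      linear_combination -(y ^ b.v.val * y ^ c.v.val * geomSumZMod y a.v) * hcomm
  one_mul g := by ext <;> simp
  mul_one g := by ext <;> simp
  inv_mul_cancel g := by
    ext
    · exact neg_add_cancel _
    · exact neg_add_cancel _
    · simp only [mul_def, inv_def, one_def]
      linear_combination (-(g.w * y ^ g.v.val * y ^ (-g.v).val)
        - y ^ g.v.val * geomSumZMod x g.u * geomSumZMod y (-g.v)) * pow_val_mul_pow_val_neg hx.out g.u
        - g.w * pow_val_mul_pow_val_neg hy.out g.v

variable (p x y)

def ofU : Multiplicative (ZMod p) →* CocycleExt p x y where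
  toFun k := ⟨k.toAdd, 0, 0⟩
  map_one' := rfl
  map_mul' k l := by ext <;> simp

def ofV : Multiplicative (ZMod p) →* CocycleExt p x y where
  toFun k := ⟨0, k.toAdd, 0⟩
  map_one' := rfl
  map_mul' k l := by ext <;> simp

def ofW : Multiplicative B →* CocycleExt p x y where
  toFun m := ⟨0, 0, m.toAdd⟩
  map_one' := rfl
  map_mul' m n := by ext <;> simp [add_comm]

variable {p x y}

theorem ofU_mul_ofV_mul_ofW (g : CocycleExt p x y) :
    ofU p x y (.ofAdd g.u) * ofV p x y (.ofAdd g.v) * ofW p x y (.ofAdd g.w) = g := by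
  ext <;> simp [ofU, ofV, ofW]

theorem orderOf_ofU_one : orderOf (ofU p x y (.ofAdd 1)) = p := by
  rw [orderOf_injective _ (fun _ _ h => congrArg u h), orderOf_ofAdd_eq_addOrderOf,
    ZMod.addOrderOf_one]

theorem orderOf_ofV_one : orderOf (ofV p x y (.ofAdd 1)) = p := by
  rw [orderOf_injective _ (fun _ _ h => congrArg v h), orderOf_ofAdd_eq_addOrderOf,
    ZMod.addOrderOf_one]

section Generators

variable [Fact (1 < p)]

theorem ofU_one_inv_mul_ofW_mul_ofU_one (m : B) :
    (ofU p x y (.ofAdd 1))⁻¹ * ofW p x y (.ofAdd m) * ofU p x y (.ofAdd 1) =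
      ofW p x y (.ofAdd (x * m)) := by
  rw [mul_assoc, inv_mul_eq_iff_eq_mul]
  ext <;> simp [ofU, ofW, ZMod.val_one]

theorem ofV_one_inv_mul_ofW_mul_ofV_one (m : B) :
    (ofV p x y (.ofAdd 1))⁻¹ * ofW p x y (.ofAdd m) * ofV p x y (.ofAdd 1) =
      ofW p x y (.ofAdd (y * m)) := by
  rw [mul_assoc, inv_mul_eq_iff_eq_mul]
  ext <;> simp [ofV, ofW, ZMod.val_one]

theorem commutator_ofU_one_ofV_one :
    (ofU p x y (.ofAdd 1) * ofV p x y (.ofAdd 1))⁻¹ * (ofV p x y (.ofAdd 1) * ofU p x y (.ofAdd 1)) =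
      ofW p x y (.ofAdd 1) := by
  rw [inv_mul_eq_iff_eq_mul]
  ext <;> simp [ofU, ofV, ofW, ZMod.val_one]

theorem closure_ofU_one_ofV_one (hxy : Subring.closure {x, y} = ⊤) :
    Subgroup.closure {ofU p x y (.ofAdd 1), ofV p x y (.ofAdd 1)} = ⊤ := by
  set a := ofU p x y (.ofAdd 1)
  set b := ofV p x y (.ofAdd 1)
  set H := Subgroup.closure {a, b}
  have ha : a ∈ H := Subgroup.subset_closure (by simp)
  have hb : b ∈ H := Subgroup.subset_closure (by simp)
  have hW : Subgroup.toAddSubgroup' (H.comap (ofW p x y)) = ⊤ := by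
    refine AddSubgroup.eq_top_of_one_mem_of_mul_mem hxy _ ?_ ?_
    · rw [Subgroup.mem_toAddSubgroup', Subgroup.mem_comap, ← commutator_ofU_one_ofV_one]
      exact H.mul_mem (H.inv_mem (H.mul_mem ha hb)) (H.mul_mem hb ha)
    · rintro c (rfl | rfl) m hm <;> rw [Subgroup.mem_toAddSubgroup', Subgroup.mem_comap] at hm ⊢
      · rw [← ofU_one_inv_mul_ofW_mul_ofU_one]
        exact H.mul_mem (H.mul_mem (H.inv_mem ha) hm) ha
      · rw [← ofV_one_inv_mul_ofW_mul_ofV_one]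
        exact H.mul_mem (H.mul_mem (H.inv_mem hb) hm) hb
  refine (Subgroup.eq_top_iff' H).mpr fun g => ?_
  rw [← ofU_mul_ofV_mul_ofW g, ZMod.ofAdd_eq_ofAdd_one_pow_val g.u,
    ZMod.ofAdd_eq_ofAdd_one_pow_val g.v, map_pow, map_pow]
  have hw : g.w ∈ Subgroup.toAddSubgroup' (H.comap (ofW p x y)) := hW ▸ AddSubgroup.mem_top _
  exact H.mul_mem (H.mul_mem (H.pow_mem ha _) (H.pow_mem hb _)) hw

end Generators

end CocycleExt

theorem stmt_3_general (p : ℕ) (hp : p.Prime) (n : ℕ) :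
    ∃ (P : Type) (_ : Group P) (_ : Fintype P),
      Fintype.card P = p ^ (n * (p - 1) ^ 2 + 2) ∧
      ∃ a b : P, orderOf a = p ∧ orderOf b = p ∧
        Subgroup.closure ({a, b} : Set P) = ⊤ := by
  have := Fact.mk hp
  have := Fact.mk hp.one_lt
  let A := AdjoinRoot (cyclotomic p (ZMod (p ^ n)))
  let x : AdjoinRoot (cyclotomic p A) := AdjoinRoot.of _ (AdjoinRoot.root _)
  let y : AdjoinRoot (cyclotomic p A) := AdjoinRoot.root _
  have : Fact (∑ i ∈ range p, x ^ i = 0) := ⟨by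
    simp only [x, ← map_pow, ← map_sum]
    rw [AdjoinRoot.geom_sum_root_cyclotomic, map_zero]⟩
  have : Fact (∑ i ∈ range p, y ^ i = 0) := ⟨AdjoinRoot.geom_sum_root_cyclotomic p⟩
  have hxy : Subring.closure {x, y} = ⊤ := by
    simpa [Set.pair_comm] using AdjoinRoot.subringClosure_insert_root_image_eq_top
      (AdjoinRoot.subringClosure_insert_root_image_eq_top (ZMod.subringClosure_empty_eq_top (p ^ n)))
  refine ⟨CocycleExt p x y, inferInstance, Fintype.ofFinite _, ?_, _, _,
    CocycleExt.orderOf_ofU_one, CocycleExt.orderOf_ofV_one, CocycleExt.closure_ofU_one_ofV_one hxy⟩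
  rw [Fintype.card_eq_nat_card, CocycleExt.natCard, AdjoinRoot.natCard_cyclotomic,
    AdjoinRoot.natCard_cyclotomic, Nat.card_zmod, Nat.totient_prime hp, ← pow_mul, ← pow_mul]
  ring

/-- For every prime `p` and every `n ≥ 1`, there exists a finite group of
order exactly `p ^ (n * (p - 1) ^ 2 + 2)` that is generated by two elements,
each of order exactly `p`. -/
theorem stmt_3 (p : ℕ) (hp : p.Prime) (n : ℕ) (hn : 1 ≤ n) :
    ∃ (P : Type) (_ : Group P) (_ : Fintype P),
      Fintype.card P = p ^ (n * (p - 1) ^ 2 + 2) ∧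
      ∃ a b : P, orderOf a = p ∧ orderOf b = p ∧
        Subgroup.closure ({a, b} : Set P) = ⊤ :=
  stmt_3_general p hp n
end

section
/- For every prime p and every c ≥ 1, the group H_{p,c} is finite and nilpotent of class at most c. -/
/-- The commutator `[x, y] = x⁻¹ * y⁻¹ * x * y`. -/
def pComm {G : Type*} [Group G] (x y : G) : G := x⁻¹ * y⁻¹ * x * y

/-- The left-normed higher commutator: `lnComm x [y₁, …, y_m] = [x, y₁, …, y_m]`,
where `[x₁, …, x_m] = [[x₁, …, x_{m-1}], x_m]`. -/
def lnComm {G : Type*} [Group G] : G → List G → G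
  | x, [] => x
  | x, y :: l => lnComm (pComm x y) l

section Aux

variable {G : Type*} {H : Type*} [Group G] [Group H]

lemma pComm_map (f : G →* H) (x y : G) : f (pComm x y) = pComm (f x) (f y) := by
  simp [pComm]

lemma lnComm_map (f : G →* H) : ∀ (l : List G) (x : G),
    f (lnComm x l) = lnComm (f x) (l.map f)
  | [], x => rfl
  | y :: l, x => by
    simp only [lnComm, List.map_cons, lnComm_map f l, pComm_map]

lemma lnComm_append (y : G) : ∀ (l : List G) (x : G),
    lnComm x (l ++ [y]) = pComm (lnComm x l) y
  | [], x => rfl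
  | z :: l, x => lnComm_append y l (pComm x z)

lemma pComm_eq_one_iff {x y : G} : pComm x y = 1 ↔ x * y = y * x := by
  rw [pComm, mul_assoc, mul_assoc, inv_mul_eq_one, eq_inv_mul_iff_mul_eq, eq_comm]

/-- An element commuting with all generators is central. -/
lemma mem_center_of_forall {S : Set G} (hS : Subgroup.closure S = ⊤) {z : G}
    (h : ∀ u ∈ S, pComm z u = 1) : z ∈ Subgroup.center G := by
  rw [Subgroup.mem_center_iff]
  intro g
  have hle : Subgroup.closure S ≤ Subgroup.centralizer {z} := by
    rw [Subgroup.closure_le]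
    intro u hu
    rw [SetLike.mem_coe, Subgroup.mem_centralizer_iff]
    rintro s rfl
    exact pComm_eq_one_iff.mp (h u hu)
  have hg : g ∈ Subgroup.centralizer {z} := hle (hS ▸ Subgroup.mem_top g)
  exact (Subgroup.mem_centralizer_iff.mp hg z rfl).symm

/-- The hypothesis: all left-normed commutators of `c+1` generators vanish. -/
def GenRel (S : Set G) (c : ℕ) : Prop :=
  ∀ s ∈ S, ∀ l : List G, (∀ y ∈ l, y ∈ S) → l.length = c → lnComm s l = 1

lemma closure_image_top {f : G →* H} (hf : Function.Surjective f) {S : Set G}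
    (hS : Subgroup.closure S = ⊤) : Subgroup.closure (f '' S) = ⊤ := by
  rw [← MonoidHom.map_closure, hS, ← MonoidHom.range_eq_map, MonoidHom.range_eq_top]
  exact hf

lemma list_lift {A B : Type*} (f : B → A) (T : Set B) :
    ∀ l : List A, (∀ y ∈ l, ∃ x ∈ T, f x = y) →
      ∃ l' : List B, (∀ x ∈ l', x ∈ T) ∧ l'.map f = l := by
  intro l
  induction l with
  | nil => exact fun _ => ⟨[], by simp⟩
  | cons a l ih =>
    intro h
    obtain ⟨x, hx, hfx⟩ := h a List.mem_cons_self
    obtain ⟨l', hl', hml⟩ := ih fun y hy => h y (List.mem_cons_of_mem a hy)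
    refine ⟨x :: l', ?_, by simp [hfx, hml]⟩
    intro z hz
    rcases List.mem_cons.mp hz with rfl | hz
    · exact hx
    · exact hl' _ hz

lemma central_of {S : Set G} (hS : Subgroup.closure S = ⊤) {c : ℕ}
    (h : GenRel S (c + 1)) : ∀ s ∈ S, ∀ l : List G, (∀ y ∈ l, y ∈ S) →
      l.length = c → lnComm s l ∈ Subgroup.center G := by
  intro s hs l hl hlen
  apply mem_center_of_forall hS
  intro u hu
  rw [← lnComm_append]
  refine h s hs (l ++ [u]) ?_ (by simp [hlen])
  intro y hy
  rcases List.mem_append.mp hy with hy | hy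
  · exact hl y hy
  · rw [List.mem_singleton] at hy; exact hy ▸ hu

lemma genRel_image {S : Set G} (hS : Subgroup.closure S = ⊤) {c : ℕ}
    (h : GenRel S (c + 1)) :
    GenRel ((QuotientGroup.mk' (Subgroup.center G)) '' S) c := by
  set π := QuotientGroup.mk' (Subgroup.center G)
  rintro s' ⟨s, hs, rfl⟩ l' hl' hlen
  obtain ⟨l, hlS, rfl⟩ := list_lift π S l' fun y hy => by
    obtain ⟨x, hx, hfx⟩ := hl' y hy
    exact ⟨x, hx, hfx⟩
  rw [← lnComm_map, ← MonoidHom.mem_ker, QuotientGroup.ker_mk']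
  exact central_of hS h s hs l hlS (by simpa using hlen)

end Aux

section Main

universe u

open scoped commutatorElement

/-- If all left-normed commutators of `c` generators (plus the initial one, so weight `c+1`...
actually weight `c+1` lists of length `c`) vanish, then all left-normed commutators of length
`c` of arbitrary elements vanish. -/
lemma lnComm_eq_one_of_genRel : ∀ (c : ℕ) {G : Type u} [Group G] (S : Set G),
    Subgroup.closure S = ⊤ → GenRel S c →
    ∀ (x : G) (l : List G), l.length = c → lnComm x l = 1 := by
  intro c
  induction c with
  | zero =>
    intro G _ S hS h x l hlen
    rw [List.length_eq_zero_iff] at hlen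
    subst hlen
    have hsub : S ⊆ ((⊥ : Subgroup G) : Set G) := by
      intro s hs
      rw [SetLike.mem_coe, Subgroup.mem_bot]
      exact h s hs [] (by simp) rfl
    have : (⊤ : Subgroup G) ≤ ⊥ := hS ▸ Subgroup.closure_le _ |>.mpr hsub
    exact Subgroup.mem_bot.mp (this (Subgroup.mem_top x))
  | succ c ih =>
    intro G _ S hS h x l hlen
    obtain ⟨l', y, rfl⟩ : ∃ l' y, l = l' ++ [y] := by
      cases l using List.reverseRecOn with
      | nil => simp at hlen
      | append_singleton l' y => exact ⟨l', y, rfl⟩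
    rw [lnComm_append]
    have hlen' : l'.length = c := by simpa using hlen
    have hcentral : lnComm x l' ∈ Subgroup.center G := by
      have h1 := closure_image_top (QuotientGroup.mk'_surjective (Subgroup.center G)) hS
      have h2 := genRel_image hS h
      have h3 := ih _ h1 h2 (QuotientGroup.mk' (Subgroup.center G) x)
        (l'.map (QuotientGroup.mk' (Subgroup.center G))) (by simpa using hlen')
      rw [← lnComm_map, ← MonoidHom.mem_ker, QuotientGroup.ker_mk'] at h3
      exact h3
    exact pComm_eq_one_iff.mpr (Subgroup.mem_center_iff.mp hcentral y).symm

/-- Central modification does not change commutators. -/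
lemma commutator_central {G : Type u} [Group G] (g h z w : G)
    (hz : z ∈ Subgroup.center G) (hw : w ∈ Subgroup.center G) :
    ⁅g * z, h * w⁆ = ⁅g, h⁆ := by
  have hz1 : ∀ a : G, z * a = a * z := fun a => (Subgroup.mem_center_iff.mp hz a).symm
  have hw1 : ∀ a : G, w * a = a * w := fun a => (Subgroup.mem_center_iff.mp hw a).symm
  have hz2 : ∀ a b : G, z * (a * b) = a * (z * b) := fun a b => by
    rw [← mul_assoc, hz1 a, mul_assoc]
  have hw2 : ∀ a b : G, w * (a * b) = a * (w * b) := fun a b => by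
    rw [← mul_assoc, hw1 a, mul_assoc]
  simp only [commutatorElement_def, mul_inv_rev, mul_assoc]
  rw [hz2, hz2, mul_inv_cancel_left, hw2, mul_inv_cancel_left]

lemma finite_commutatorSet_of_quot_center {G : Type u} [Group G]
    [Finite (G ⧸ Subgroup.center G)] : Finite (commutatorSet G) := by
  set Z := Subgroup.center G
  have key : ∀ g h : G,
      ⁅g, h⁆ = ⁅((g : G ⧸ Z)).out, ((h : G ⧸ Z)).out⁆ := by
    intro g h
    obtain ⟨z, hz⟩ := QuotientGroup.mk_out_eq_mul Z g
    obtain ⟨w, hw⟩ := QuotientGroup.mk_out_eq_mul Z h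
    rw [hz, hw, commutator_central g h z w z.2 w.2]
  have hsub : commutatorSet G ⊆
      Set.range (fun q : (G ⧸ Z) × (G ⧸ Z) => ⁅q.1.out, q.2.out⁆) := by
    rintro _ ⟨g, h, rfl⟩
    exact ⟨(g, h), (key g h).symm⟩
  exact ((Set.finite_range _).subset hsub).to_subtype

/-- A group generated by a finite set of elements of order dividing `p > 0`, all of whose
left-normed commutators of generators of length `c` vanish, is finite. -/
lemma finite_of_genRel (p : ℕ) (hp : 0 < p) : ∀ (c : ℕ) {G : Type u} [Group G] (S : Set G),
    S.Finite → Subgroup.closure S = ⊤ → (∀ s ∈ S, s ^ p = 1) → GenRel S c →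
    Finite G := by
  intro c
  induction c with
  | zero =>
    intro G _ S _ hS _ h
    have hone : ∀ x : G, x = 1 :=
      fun x => lnComm_eq_one_of_genRel 0 S hS h x [] rfl
    haveI : Subsingleton G := ⟨fun a b => by rw [hone a, hone b]⟩
    infer_instance
  | succ c ih =>
    intro G _ S hfin hS htor h
    set π := QuotientGroup.mk' (Subgroup.center G) with hπ
    have h1 := closure_image_top (QuotientGroup.mk'_surjective (Subgroup.center G)) hS
    haveI hQ : Finite (G ⧸ Subgroup.center G) := by
      refine ih (π '' S) (hfin.image π) h1 ?_ (genRel_image hS h)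
      rintro _ ⟨s, hs, rfl⟩
      rw [← map_pow, htor s hs, map_one]
    haveI : Finite (commutatorSet G) := finite_commutatorSet_of_quot_center
    haveI : Finite (_root_.commutator G) := inferInstance
    haveI : Group.FG G := Group.fg_iff.mpr ⟨S, hS, hfin⟩
    have hos : Function.Surjective (Abelianization.of : G →* Abelianization G) :=
      fun y => QuotientGroup.mk'_surjective (_root_.commutator G) y
    haveI : Group.FG (Abelianization G) := Group.fg_of_surjective hos
    have htorsion : Monoid.IsTorsion (Abelianization G) := by
      intro x
      have hcl : Subgroup.closure ((Abelianization.of : G →* Abelianization G) '' S) = ⊤ :=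
        closure_image_top hos hS
      have hsub : Subgroup.closure ((Abelianization.of : G →* Abelianization G) '' S) ≤
          CommGroup.torsion (Abelianization G) := by
        rw [Subgroup.closure_le]
        rintro _ ⟨s, hs, rfl⟩
        rw [SetLike.mem_coe, CommGroup.mem_torsion]
        exact isOfFinOrder_iff_pow_eq_one.mpr
          ⟨p, hp, by rw [← map_pow, htor s hs, map_one]⟩
      exact hsub (hcl ▸ Subgroup.mem_top x)
    haveI : Finite (Abelianization G) := CommGroup.finite_of_fg_torsion _ htorsion
    haveI : Finite (G ⧸ _root_.commutator G) := ‹Finite (Abelianization G)›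
    exact (Subgroup.finite_iff_finite_and_finiteIndex (H := _root_.commutator G)).mpr
      ⟨inferInstance, Subgroup.finiteIndex_of_finite_quotient⟩

end Main

/-- The relations of the presented group `H_{p,c}`: the generators `a₁, a₂`
(indexed by `Fin 2`) satisfy `aᵢ^p = 1` and all left-normed commutators of
length `c + 1` in the generators are trivial. -/
def Hrels (p c : ℕ) : Set (FreeGroup (Fin 2)) :=
  {w | (∃ i : Fin 2, w = FreeGroup.of i ^ p) ∨
       (∃ (i : Fin 2) (t : Fin c → Fin 2),
          w = lnComm (FreeGroup.of i) ((List.ofFn t).map FreeGroup.of))}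

/-- The group `H_{p,c}` presented by two generators `a₁, a₂` with relations
`a₁^p = a₂^p = 1` and `[a_{i₀}, a_{i₁}, …, a_{i_c}] = 1` for all tuples
`(i₀, …, i_c) ∈ {1,2}^{c+1}`. -/
abbrev Hgroup (p c : ℕ) : Type := PresentedGroup (Hrels p c)

lemma ofFn_get_cast {A : Type*} (l : List A) {c : ℕ} (h : l.length = c) :
    List.ofFn (fun j : Fin c => l.get (Fin.cast h.symm j)) = l := by
  subst h
  simpa using List.ofFn_get l

/-- For every prime `p` and every `c ≥ 1`, the group `H_{p,c}` is finite and
nilpotent of class at most `c` (every left-normed commutator of `c + 1`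
elements is trivial). -/
theorem stmt_4 (p c : ℕ) (hp : p.Prime) (hc : 1 ≤ c) :
    Finite (Hgroup p c) ∧
    ∀ (x : Hgroup p c) (l : List (Hgroup p c)), l.length = c → lnComm x l = 1 := by
  have hp0 : 0 < p := hp.pos
  set S : Set (Hgroup p c) := Set.range (PresentedGroup.of (rels := Hrels p c)) with hSdef
  have hS : Subgroup.closure S = ⊤ := PresentedGroup.closure_range_of _
  have hrel1 : ∀ r ∈ Hrels p c, PresentedGroup.mk (Hrels p c) r = 1 := fun r hr =>
    (QuotientGroup.eq_one_iff r).mpr (Subgroup.subset_normalClosure hr)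
  have htor : ∀ s ∈ S, s ^ p = 1 := by
    rintro _ ⟨i, rfl⟩
    have h1 : PresentedGroup.of (rels := Hrels p c) i ^ p
        = PresentedGroup.mk (Hrels p c) (FreeGroup.of i ^ p) := (map_pow _ _ _).symm
    rw [h1]
    exact hrel1 _ (Or.inl ⟨i, rfl⟩)
  have hgen : GenRel S c := by
    intro s hs l hl hlen
    obtain ⟨i, rfl⟩ := hs
    obtain ⟨l', -, rfl⟩ := list_lift (fun i : Fin 2 =>
        PresentedGroup.of (rels := Hrels p c) i) Set.univ l
      (fun y hy => by obtain ⟨j, hj⟩ := hl y hy; exact ⟨j, Set.mem_univ j, hj⟩)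
    have hlen' : l'.length = c := by simpa using hlen
    set t : Fin c → Fin 2 := fun j => l'.get (Fin.cast hlen'.symm j) with ht
    have hofn : List.ofFn t = l' := ofFn_get_cast l' hlen'
    have key : lnComm (PresentedGroup.of (rels := Hrels p c) i)
        (l'.map (fun i : Fin 2 => PresentedGroup.of (rels := Hrels p c) i))
        = PresentedGroup.mk (Hrels p c)
            (lnComm (FreeGroup.of i) (l'.map FreeGroup.of)) := by
      rw [lnComm_map, List.map_map]
      rfl
    rw [key]
    apply hrel1
    refine Or.inr ⟨i, t, ?_⟩
    rw [hofn]
  constructor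
  · exact finite_of_genRel p hp0 c S (Set.finite_range _) hS htor hgen
  · exact fun x l hl => lnComm_eq_one_of_genRel c S hS hgen x l hl
end

section
/- For every prime p, the orders |H_{p,c}| tend to infinity as c → ∞: for every natural number ℓ there exists c ≥ 1 such that |H_{p,c}| ≥ ℓ. -/
section lnCommLemmas

open scoped commutatorElement

variable {G : Type*} [Group G] {H : Type*} [Group H]

theorem map_lnComm (f : G →* H) (g : G) (l : List G) :
    f (lnComm g l) = lnComm (f g) (l.map f) := by
  induction l generalizing g with
  | nil => rfl
  | cons y l ih => simp [lnComm, pComm, ih, map_mul, map_inv]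

theorem lnComm_append_s6 (g : G) (l₁ l₂ : List G) :
    lnComm g (l₁ ++ l₂) = lnComm (lnComm g l₁) l₂ := by
  induction l₁ generalizing g with
  | nil => rfl
  | cons y l ih => simp [lnComm, ih]

theorem lnComm_mem_lowerCentralSeries {g : G} {m : ℕ}
    (hg : g ∈ Subgroup.lowerCentralSeries (⊤ : Subgroup G) m) (l : List G) :
    lnComm g l ∈ Subgroup.lowerCentralSeries (⊤ : Subgroup G) (m + l.length) := by
  induction l generalizing g m with
  | nil => simpa [lnComm] using hg
  | cons y l ih =>
      have h1 : pComm g y ∈ Subgroup.lowerCentralSeries (⊤ : Subgroup G) (m + 1) := by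
        have : ⁅g⁻¹, y⁻¹⁆ ∈ Subgroup.lowerCentralSeries (⊤ : Subgroup G) (m + 1) := by
          rw [Subgroup.lowerCentralSeries_succ]
          exact Subgroup.commutator_mem_commutator (inv_mem hg) (Subgroup.mem_top _)
        simpa [commutatorElement_def, pComm, mul_assoc] using this
      have := ih h1
      simpa [lnComm, List.length_cons, Nat.add_right_comm m 1 l.length, Nat.add_assoc] using this

end lnCommLemmas


section UCS

open scoped commutatorElement

variable {G : Type*} [Group G]

theorem mem_ucs_succ_of_gen (S : Set G) (hS : Subgroup.closure S = ⊤) (n : ℕ) (x : G)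
    (h : ∀ s ∈ S, x⁻¹ * s⁻¹ * x * s ∈ Subgroup.upperCentralSeries G n) :
    x ∈ Subgroup.upperCentralSeries G (n + 1) := by
  rw [Subgroup.mem_upperCentralSeries_succ_iff]
  intro y
  set N := Subgroup.upperCentralSeries G n with hN
  let q : G →* G ⧸ N := QuotientGroup.mk' N
  have key : ∀ s ∈ S, s ∈ (Subgroup.centralizer {q x}).comap q := by
    intro s hs
    simp only [Subgroup.mem_comap, Subgroup.mem_centralizer_singleton_iff]
    have h1 : (q x)⁻¹ * (q s)⁻¹ * q x * q s = 1 := by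
      have := (QuotientGroup.eq_one_iff _).mpr (h s hs)
      rw [← map_inv, ← map_inv, ← map_mul, ← map_mul, ← map_mul]
      exact this
    have h2 : q s * q x * ((q x)⁻¹ * (q s)⁻¹ * q x * q s) = q s * q x := by
      rw [h1, mul_one]
    have h3 : q s * q x * ((q x)⁻¹ * (q s)⁻¹ * q x * q s) = q x * q s := by group
    exact h2.symm.trans h3
  have hy : q y * q x = q x * q y := by
    have h4 : (⊤ : Subgroup G) ≤ (Subgroup.centralizer {q x}).comap q := by
      rw [← hS]; exact (Subgroup.closure_le _).mpr key
    have := h4 (Subgroup.mem_top y)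
    simpa only [Subgroup.mem_comap, Subgroup.mem_centralizer_singleton_iff] using this
  have : q (x * y * x⁻¹ * y⁻¹) = 1 := by
    simp only [map_mul, map_inv]
    rw [← hy]; group
  exact (QuotientGroup.eq_one_iff _).mp this

theorem commutator_mul_center (g h z w : G) (hz : z ∈ Subgroup.center G)
    (hw : w ∈ Subgroup.center G) : ⁅g * z, h * w⁆ = ⁅g, h⁆ := by
  have hzc : ∀ a : G, z * a * z⁻¹ = a := fun a => by
    rw [mul_inv_eq_iff_eq_mul]
    exact (Subgroup.mem_center_iff.mp hz a).symm
  have hw' : w * g⁻¹ = g⁻¹ * w := (Subgroup.mem_center_iff.mp hw g⁻¹).symm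
  calc ⁅g * z, h * w⁆
      = g * ((z * (h * w)) * z⁻¹) * g⁻¹ * (w⁻¹ * h⁻¹) := by
        rw [commutatorElement_def]; group
    _ = g * (h * w) * g⁻¹ * (w⁻¹ * h⁻¹) := by rw [hzc (h * w)]
    _ = g * h * ((w * g⁻¹) * w⁻¹) * h⁻¹ := by group
    _ = g * h * ((g⁻¹ * w) * w⁻¹) * h⁻¹ := by rw [hw']
    _ = g * h * g⁻¹ * h⁻¹ := by group
    _ = ⁅g, h⁆ := (commutatorElement_def g h).symm

theorem finite_of_nilpotent_gen_torsion (G : Type*) [Group G] [Group.IsNilpotent G]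
    (S : Set G) (hfin : S.Finite) (htor : ∀ s ∈ S, IsOfFinOrder s)
    (hgen : Subgroup.closure S = ⊤) : Finite G := by
  refine nilpotent_center_quotient_ind
    (P := fun G _ _ => ∀ S : Set G, S.Finite → (∀ s ∈ S, IsOfFinOrder s) →
      Subgroup.closure S = ⊤ → Finite G) G ?_ ?_ S hfin htor hgen
  · exact fun _ _ _ _ _ _ _ => Finite.of_subsingleton
  · intro G _ _ ih S hfin htor hgen
    classical
    set Z := Subgroup.center G
    let q : G →* G ⧸ Z := QuotientGroup.mk' Z
    -- the center quotient is finite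
    have hQfin : Finite (G ⧸ Z) := by
      refine ih (q '' S) (hfin.image _) ?_ ?_
      · rintro _ ⟨s, hs, rfl⟩
        exact q.isOfFinOrder (htor s hs)
      · rw [← MonoidHom.map_closure, hgen,
          Subgroup.map_top_of_surjective _ (QuotientGroup.mk'_surjective Z)]
    -- hence the commutator set is finite
    have hCfin : Finite (commutatorSet G) := by
      have hsub : commutatorSet G ⊆
          Set.range (fun ab : (G ⧸ Z) × (G ⧸ Z) => ⁅Quotient.out ab.1, Quotient.out ab.2⁆) := by
        rintro _ ⟨g, h, rfl⟩
        refine ⟨(q g, q h), ?_⟩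
        have hg : Quotient.out (q g) = g * (g⁻¹ * Quotient.out (q g)) := by group
        have hh : Quotient.out (q h) = h * (h⁻¹ * Quotient.out (q h)) := by group
        have hgz : g⁻¹ * Quotient.out (q g) ∈ Z := by
          rw [← QuotientGroup.eq]
          exact (Quotient.out_eq (q g)).symm
        have hhz : h⁻¹ * Quotient.out (q h) ∈ Z := by
          rw [← QuotientGroup.eq]
          exact (Quotient.out_eq (q h)).symm
        show ⁅Quotient.out (q g), Quotient.out (q h)⁆ = ⁅g, h⁆
        rw [hg, hh] -- might rewrite too much; check
        exact commutator_mul_center g h _ _ hgz hhz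
      exact Finite.Set.subset _ hsub
    have hcomm : Finite (_root_.commutator G) := inferInstance
    have hof : Function.Surjective (Abelianization.of : G →* Abelianization G) :=
      fun x => Quotient.inductionOn' x fun z => ⟨z, rfl⟩
    -- the abelianization is finite
    have hAbFG : Group.FG (Abelianization G) := by
      refine Group.fg_iff.mpr ⟨Abelianization.of '' S, ?_, hfin.image _⟩
      rw [← MonoidHom.map_closure, hgen,
        Subgroup.map_top_of_surjective _ hof]
    have hAbTor : Monoid.IsTorsion (Abelianization G) := by
      intro x
      have : x ∈ CommGroup.torsion (Abelianization G) := by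
        have : Subgroup.closure (Abelianization.of '' S) ≤ CommGroup.torsion (Abelianization G) := by
          refine (Subgroup.closure_le _).mpr ?_
          rintro _ ⟨s, hs, rfl⟩
          exact (Abelianization.of (G := G)).isOfFinOrder (htor s hs)
        have htop : Subgroup.closure (Abelianization.of '' S) = ⊤ := by
          rw [← MonoidHom.map_closure, hgen,
            Subgroup.map_top_of_surjective _ hof]
        rw [htop] at this
        exact this (Subgroup.mem_top x)
      exact this
    have hAbFin : Finite (Abelianization G) := CommGroup.finite_of_fg_torsion _ hAbTor
    have hQCfin : Finite (G ⧸ _root_.commutator G) := hAbFin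
    exact Finite.of_equiv _ (Subgroup.groupEquivQuotientProdSubgroup (s := _root_.commutator G)).symm

end UCS

section Witness


open Polynomial Finset in

theorem exists_witness (p k : ℕ) (hp : p.Prime) (hk : 1 ≤ k) :
    ∃ (G : Type) (_ : Group G) (g : Fin 2 → G), Finite G ∧
      (∀ i, g i ^ p = 1) ∧ Subgroup.closure (Set.range g) = ⊤ ∧
      Group.IsNilpotent G ∧ p ^ k ≤ Nat.card G := by
  classical
  haveI : Fact p.Prime := ⟨hp⟩
  haveI : NeZero p := ⟨hp.ne_zero⟩
  haveI : NeZero (p ^ k) := ⟨pow_ne_zero k hp.ne_zero⟩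
  haveI : Fact (1 < p ^ k) := by
    refine ⟨?_⟩
    have h2 := hp.two_le
    have h3 : p ≤ p ^ k := Nat.le_self_pow (by omega) p
    omega
  set q := p ^ k with hqdef
  set Φ : Polynomial (ZMod q) := ∑ i ∈ range p, (X : Polynomial (ZMod q)) ^ i with hΦ
  have hmonic : Φ.Monic := monic_geom_sum_X hp.ne_zero
  have hdeg : Φ.natDegree = p - 1 := by
    obtain ⟨m, hm⟩ : ∃ m, p = m + 1 := ⟨p - 1, by have := hp.two_le; omega⟩
    have hm1 : 1 ≤ m := by have := hp.two_le; omega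
    have h1 : Φ = (∑ i ∈ range m, (X : Polynomial (ZMod q)) ^ i) + X ^ m := by
      rw [hΦ, hm, Finset.sum_range_succ]
    have h2 : (∑ i ∈ range m, (X : Polynomial (ZMod q)) ^ i).natDegree ≤ m - 1 := by
      refine natDegree_sum_le_of_forall_le _ _ fun i hi => ?_
      rw [natDegree_X_pow]
      exact Nat.le_sub_one_of_lt (Finset.mem_range.mp hi)
    rw [h1, natDegree_add_eq_right_of_natDegree_lt (by rw [natDegree_X_pow]; omega),
      natDegree_X_pow, hm]
    omega
  set R := AdjoinRoot Φ with hR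
  set r : R := AdjoinRoot.root Φ with hr
  have hsum : (∑ i ∈ range p, r ^ i) = 0 := by
    have h1 : AdjoinRoot.mk Φ Φ = AdjoinRoot.mk Φ (∑ i ∈ range p, X ^ i) :=
      congrArg (AdjoinRoot.mk Φ) hΦ
    calc (∑ i ∈ range p, r ^ i)
        = AdjoinRoot.mk Φ (∑ i ∈ range p, X ^ i) := by
          rw [map_sum]
          simp [map_pow, AdjoinRoot.mk_X, hr]
      _ = AdjoinRoot.mk Φ Φ := h1.symm
      _ = 0 := AdjoinRoot.mk_self
  have hrp : r ^ p = 1 := by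
    have h := geom_sum_mul r p
    rw [hsum, zero_mul] at h
    have := h.symm
    rwa [sub_eq_zero] at this
  have hrmod : ∀ m : ℕ, r ^ (m % p) = r ^ m := by
    intro m
    conv_rhs => rw [← Nat.div_add_mod m p]
    rw [pow_add, pow_mul, hrp, one_pow, one_mul]
  set pb := AdjoinRoot.powerBasis' hmonic with hpb
  have hdim : pb.dim = p - 1 := by rw [hpb, AdjoinRoot.powerBasis'_dim, hdeg]
  set e := pb.basis.equivFun with he
  haveI hRfin : Finite R := Finite.of_equiv _ e.toEquiv.symm
  have hcardR : Nat.card R = q ^ (p - 1) := by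
    rw [Nat.card_congr e.toEquiv]
    simp [Nat.card_pi, Nat.card_zmod, hdim]
  have hval_lt : ∀ z : ZMod p, z.val < p := fun z => ZMod.val_lt z
  set act : ZMod p → (Multiplicative R ≃* Multiplicative R) := fun z =>
    { toFun := fun x => Multiplicative.ofAdd (r ^ z.val * x.toAdd)
      invFun := fun x => Multiplicative.ofAdd (r ^ (p - z.val) * x.toAdd)
      left_inv := fun x => by
        simp only [toAdd_ofAdd, ← mul_assoc, ← pow_add]
        rw [Nat.sub_add_cancel (le_of_lt (hval_lt z)), hrp, one_mul]
        simp
      right_inv := fun x => by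
        simp only [toAdd_ofAdd, ← mul_assoc, ← pow_add]
        rw [Nat.add_sub_cancel' (le_of_lt (hval_lt z)), hrp, one_mul]
        simp
      map_mul' := fun x y => by
        simp only [toAdd_mul, mul_add, ofAdd_add] } with hact
  set φ : Multiplicative (ZMod p) →* MulAut (Multiplicative R) :=
    { toFun := fun z => act z.toAdd
      map_one' := by
        ext x
        show Multiplicative.ofAdd (r ^ (0 : ZMod p).val * x.toAdd) = x
        rw [ZMod.val_zero, pow_zero, one_mul]
        simp
      map_mul' := fun a b => by
        ext x
        show Multiplicative.ofAdd (r ^ (a.toAdd + b.toAdd).val * x.toAdd)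
          = Multiplicative.ofAdd (r ^ (a.toAdd).val * (r ^ (b.toAdd).val * x.toAdd))
        rw [ZMod.val_add, hrmod, pow_add, mul_assoc] } with hφ
  set Gp := SemidirectProduct (Multiplicative R) (Multiplicative (ZMod p)) φ with hGp
  haveI hGpfin : Finite Gp :=
    Finite.of_equiv (Multiplicative R × Multiplicative (ZMod p))
      ⟨fun x => ⟨x.1, x.2⟩, fun x => (x.left, x.right), fun x => rfl, fun x => rfl⟩
  have hφ_apply : ∀ (z : ZMod p) (t : R),
      φ (Multiplicative.ofAdd z) (Multiplicative.ofAdd t)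
        = Multiplicative.ofAdd (r ^ z.val * t) := fun z t => rfl
  have hpow : ∀ (t : R) (m : ℕ),
      (⟨Multiplicative.ofAdd t, Multiplicative.ofAdd (1 : ZMod p)⟩ : Gp) ^ m
        = ⟨Multiplicative.ofAdd ((∑ i ∈ range m, r ^ i) * t),
            Multiplicative.ofAdd ((m : ZMod p))⟩ := by
    intro t m
    induction m with
    | zero =>
        rw [pow_zero]
        refine SemidirectProduct.ext ?_ ?_ <;> simp
    | succ m ih =>
        rw [pow_succ, ih]
        refine SemidirectProduct.ext ?_ ?_
        · rw [SemidirectProduct.mul_left]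
          show Multiplicative.ofAdd ((∑ i ∈ range m, r ^ i) * t) *
            φ (Multiplicative.ofAdd ((m : ZMod p))) (Multiplicative.ofAdd t) = _
          rw [hφ_apply, ZMod.val_natCast, hrmod, ← ofAdd_add, ← add_mul, ← Finset.sum_range_succ]
        · rw [SemidirectProduct.mul_right]
          show Multiplicative.ofAdd ((m : ZMod p)) * Multiplicative.ofAdd (1 : ZMod p) = _
          rw [← ofAdd_add, Nat.cast_add, Nat.cast_one]
  have hcard : Nat.card Gp = p ^ (k * (p - 1) + 1) := by
    have h1 : Nat.card Gp = Nat.card R * p := by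
      rw [Nat.card_congr
        (⟨fun (x : Gp) => (x.left, x.right), fun x => ⟨x.1, x.2⟩,
          fun x => rfl, fun x => rfl⟩ :
          Gp ≃ Multiplicative R × Multiplicative (ZMod p))]
      rw [Nat.card_prod, Nat.card_congr Multiplicative.toAdd, Nat.card_congr Multiplicative.toAdd,
        Nat.card_zmod]
    rw [h1, hcardR, hqdef, ← pow_mul, ← pow_succ]
  refine ⟨Gp, inferInstance,
    ![SemidirectProduct.inr (Multiplicative.ofAdd (1 : ZMod p)),
      ⟨Multiplicative.ofAdd (1 : R), Multiplicative.ofAdd (1 : ZMod p)⟩], hGpfin, ?_, ?_, ?_, ?_⟩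
  · -- orders
    intro i
    have h0 : (SemidirectProduct.inr (Multiplicative.ofAdd (1 : ZMod p)) : Gp)
        = ⟨Multiplicative.ofAdd (0 : R), Multiplicative.ofAdd (1 : ZMod p)⟩ := by
      refine SemidirectProduct.ext ?_ ?_ <;> simp
    fin_cases i
    · show (SemidirectProduct.inr (Multiplicative.ofAdd (1 : ZMod p)) : Gp) ^ p = 1
      rw [h0, hpow]
      refine SemidirectProduct.ext ?_ ?_ <;> simp [ZMod.natCast_self]
    · show (⟨Multiplicative.ofAdd (1 : R), Multiplicative.ofAdd (1 : ZMod p)⟩ : Gp) ^ p = 1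
      rw [hpow]
      refine SemidirectProduct.ext ?_ ?_ <;> simp [hsum, ZMod.natCast_self]
  · -- generation
    haveI : Fact (1 < p) := ⟨hp.one_lt⟩
    set g1 : Gp := SemidirectProduct.inr (Multiplicative.ofAdd (1 : ZMod p)) with hg1
    set g2 : Gp := ⟨Multiplicative.ofAdd (1 : R), Multiplicative.ofAdd (1 : ZMod p)⟩ with hg2
    set K := Subgroup.closure (Set.range ![g1, g2]) with hK
    have hg1K : g1 ∈ K := Subgroup.subset_closure ⟨0, rfl⟩
    have hg2K : g2 ∈ K := Subgroup.subset_closure ⟨1, rfl⟩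
    set T : AddSubgroup R :=
      { carrier := {t : R | SemidirectProduct.inl (φ := φ) (Multiplicative.ofAdd t) ∈ K}
        zero_mem' := by
          simp only [Set.mem_setOf_eq, ofAdd_zero, map_one]
          exact one_mem K
        add_mem' := fun {a b} ha hb => by
          simp only [Set.mem_setOf_eq, ofAdd_add, map_mul] at *
          exact mul_mem ha hb
        neg_mem' := fun {a} ha => by
          simp only [Set.mem_setOf_eq, ofAdd_neg, map_inv] at *
          exact inv_mem ha } with hT
    have h1T : (1 : R) ∈ T := by
      have heq : SemidirectProduct.inl (φ := φ) (Multiplicative.ofAdd (1 : R)) = g2 * g1⁻¹ := by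
        rw [hg2, SemidirectProduct.mk_eq_inl_mul_inr, mul_assoc]
        rw [hg1]
        rw [mul_inv_cancel, mul_one]
      show SemidirectProduct.inl (φ := φ) (Multiplicative.ofAdd (1 : R)) ∈ K
      rw [heq]
      exact mul_mem hg2K (inv_mem hg1K)
    have hrT : ∀ t : R, t ∈ T → r * t ∈ T := by
      intro t ht
      show SemidirectProduct.inl (φ := φ) (Multiplicative.ofAdd (r * t)) ∈ K
      have heq : Multiplicative.ofAdd (r * t)
          = φ (Multiplicative.ofAdd (1 : ZMod p)) (Multiplicative.ofAdd t) := by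
        rw [hφ_apply, ZMod.val_one, pow_one]
      rw [heq, SemidirectProduct.inl_aut]
      have hinv : (SemidirectProduct.inr ((Multiplicative.ofAdd (1 : ZMod p))⁻¹) : Gp) ∈ K := by
        rw [map_inv]
        exact inv_mem hg1K
      exact mul_mem (mul_mem hg1K ht) hinv
    have hmk : ∀ f : Polynomial (ZMod q), AdjoinRoot.mk Φ f ∈ T := by
      intro f
      induction f using Polynomial.induction_on with
      | C a =>
          rw [AdjoinRoot.mk_C]
          have : ((a.val : ℕ) : ZMod q) = a := ZMod.natCast_rightInverse a
          rw [← this, map_natCast]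
          have h1 : ((a.val : ℕ) : R) = (a.val : ℕ) • (1 : R) := by
            simp [nsmul_eq_mul]
          rw [h1]
          exact AddSubgroup.nsmul_mem T h1T _
      | add f g hf hg =>
          rw [map_add]
          exact AddSubgroup.add_mem T hf hg
      | monomial n a ha =>
          have h1 : (C a * X ^ (n + 1) : Polynomial (ZMod q)) = C a * X ^ n * X := by
            rw [pow_succ, mul_assoc]
          rw [h1, map_mul, AdjoinRoot.mk_X, mul_comm]
          exact hrT _ ha
    have hTall : ∀ t : R, t ∈ T := by
      intro t
      obtain ⟨f, rfl⟩ := AdjoinRoot.mk_surjective t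
      exact hmk f
    have hinr : ∀ z : ZMod p, SemidirectProduct.inr (φ := φ) (Multiplicative.ofAdd z) ∈ K := by
      intro z
      have heq : SemidirectProduct.inr (φ := φ) (Multiplicative.ofAdd z) = g1 ^ z.val := by
        rw [hg1, ← map_pow]
        congr 1
        rw [← ofAdd_nsmul]
        congr 1
        rw [nsmul_eq_mul, mul_one]
        exact (ZMod.natCast_rightInverse z).symm ▸ rfl
      rw [heq]
      exact pow_mem hg1K _
    rw [eq_top_iff]
    intro x _
    have hx : x = SemidirectProduct.inl x.left * SemidirectProduct.inr x.right :=
      (SemidirectProduct.inl_left_mul_inr_right x).symm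
    rw [hx]
    refine mul_mem ?_ ?_
    · have := hTall x.left.toAdd
      exact this
    · have := hinr x.right.toAdd
      simpa using this
  · -- nilpotent
    have : IsPGroup p Gp := IsPGroup.of_card hcard
    exact this.isNilpotent
  · -- cardinality
    rw [hcard]
    refine Nat.pow_le_pow_right hp.pos ?_
    have h2 : 1 ≤ p - 1 := by have := hp.two_le; omega
    calc k = k * 1 := (mul_one k).symm
      _ ≤ k * (p - 1) := Nat.mul_le_mul_left k h2
      _ ≤ k * (p - 1) + 1 := Nat.le_succ _

end Witness


/-- For every prime `p`, the orders `|H_{p,c}|` tend to infinity as `c → ∞`: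
for every `ℓ` there exists `c ≥ 1` with `|H_{p,c}| ≥ ℓ`. -/
theorem stmt_6 (p : ℕ) (hp : p.Prime) (ℓ : ℕ) :
    ∃ c : ℕ, 1 ≤ c ∧ ℓ ≤ Nat.card (Hgroup p c) := by
  classical
  obtain ⟨G, _, g, hfinG, hord, hgen, hnilG, hcard⟩ :=
    exists_witness p (ℓ + 1) hp (by omega)
  obtain ⟨n, hn⟩ := nilpotent_iff_lowerCentralSeries.mp hnilG
  set c := max n 1 with hc
  have hc1 : 1 ≤ c := le_max_right n 1
  have hlcs : Subgroup.lowerCentralSeries (⊤ : Subgroup G) c = ⊥ := by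
    have h := Subgroup.lowerCentralSeries_antitone (⊤ : Subgroup G) (le_max_left n 1)
    rw [hn] at h
    exact le_bot_iff.mp h
  refine ⟨c, hc1, ?_⟩
  -- the homomorphism from the presented group to the witness group
  have hrels : ∀ w ∈ Hrels p c, FreeGroup.lift g w = 1 := by
    intro w hw
    rcases hw with ⟨i, rfl⟩ | ⟨i, t, rfl⟩
    · rw [map_pow, FreeGroup.lift_apply_of]
      exact hord i
    · rw [map_lnComm, FreeGroup.lift_apply_of]
      have hmap : ((List.ofFn t).map FreeGroup.of).map (FreeGroup.lift g)
          = (List.ofFn t).map g := by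
        rw [List.map_map]
        congr 1
        funext x
        exact FreeGroup.lift_apply_of
      rw [hmap]
      have hmem := lnComm_mem_lowerCentralSeries (G := G) (g := g i) (m := 0)
        (by simp) ((List.ofFn t).map g)
      rw [List.length_map, List.length_ofFn, Nat.zero_add, hlcs, Subgroup.mem_bot] at hmem
      exact hmem
  set π : Hgroup p c →* G := PresentedGroup.toGroup hrels with hπ
  have hsurj : Function.Surjective π := by
    rw [← MonoidHom.range_eq_top, eq_top_iff, ← hgen]
    refine (Subgroup.closure_le _).mpr ?_
    rintro _ ⟨i, rfl⟩
    exact ⟨PresentedGroup.of i, PresentedGroup.toGroup.of hrels⟩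
  -- generators of the presented group
  set aH : Fin 2 → Hgroup p c := fun i => PresentedGroup.of i with haH
  have hclosure : Subgroup.closure (Set.range aH) = ⊤ :=
    PresentedGroup.closure_range_of _
  have haHpow : ∀ i, aH i ^ p = 1 := by
    intro i
    have h1 : PresentedGroup.mk (Hrels p c) (FreeGroup.of i ^ p) = 1 :=
      (QuotientGroup.eq_one_iff _).mpr
        (Subgroup.subset_normalClosure (Or.inl ⟨i, rfl⟩))
    rw [map_pow] at h1
    exact h1
  have hrelH : ∀ (t : Fin c → Fin 2) (i : Fin 2),
      lnComm (aH i) ((List.ofFn t).map aH) = 1 := by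
    intro t i
    have h1 : PresentedGroup.mk (Hrels p c)
        (lnComm (FreeGroup.of i) ((List.ofFn t).map FreeGroup.of)) = 1 :=
      (QuotientGroup.eq_one_iff _).mpr
        (Subgroup.subset_normalClosure (Or.inr ⟨i, t, rfl⟩))
    rw [map_lnComm, List.map_map] at h1
    exact h1
  -- membership of iterated commutators of generators in the upper central series
  have key : ∀ (j : ℕ) (l : List (Fin 2)) (i : Fin 2), l.length + j = c →
      lnComm (aH i) (l.map aH) ∈ Subgroup.upperCentralSeries (Hgroup p c) j := by
    intro j
    induction j with
    | zero =>
        intro l i hl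
        rw [Nat.add_zero] at hl
        rw [Subgroup.upperCentralSeries_zero, Subgroup.mem_bot]
        set t : Fin c → Fin 2 := fun j => l.get (Fin.cast hl.symm j) with ht
        have hlt : l = List.ofFn t := by
          refine List.ext_getElem (by simp [hl]) ?_
          intro m h1 h2
          simp [ht]
        rw [hlt]
        exact hrelH t i
    | succ j ih =>
        intro l i hl
        apply mem_ucs_succ_of_gen _ hclosure
        rintro _ ⟨i', rfl⟩
        have h2 := ih (l ++ [i']) i (by simp; omega)
        rw [List.map_append, lnComm_append_s6] at h2
        simpa [lnComm, pComm] using h2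
  haveI hnilH : Group.IsNilpotent (Hgroup p c) := by
    refine ⟨⟨c, ?_⟩⟩
    rw [eq_top_iff, ← hclosure]
    refine (Subgroup.closure_le _).mpr ?_
    rintro _ ⟨i, rfl⟩
    have h3 := key c [] i (by simp)
    simpa [lnComm] using h3
  haveI hfinH : Finite (Hgroup p c) :=
    finite_of_nilpotent_gen_torsion _ (Set.range aH) (Set.finite_range _)
      (by
        rintro _ ⟨i, rfl⟩
        exact isOfFinOrder_iff_pow_eq_one.mpr ⟨p, hp.pos, haHpow i⟩)
      hclosure
  calc ℓ ≤ 2 ^ (ℓ + 1) := le_of_lt (lt_of_lt_of_le (Nat.lt_two_pow_self (n := ℓ))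
        (Nat.pow_le_pow_right (by norm_num) (Nat.le_succ ℓ)))
    _ ≤ p ^ (ℓ + 1) := Nat.pow_le_pow_left hp.two_le _
    _ ≤ Nat.card G := hcard
    _ ≤ Nat.card (Hgroup p c) := Nat.card_le_card_of_surjective π hsurj
end

section
/- For every n ≥ 2, all primes p and q, and every natural number ℓ, there exists a finite group P with |P| ≥ ℓ and a subset X ⊆ P with |X| = n+1 such that X generates P and, for every proper subset Y ⊊ X, the subgroup ⟨Y⟩ generated by Y is an extension of an abelian group of exponent dividing p by an abelian group of exponent dividing q; that is, ⟨Y⟩ has a normal subgroup N that is abelian with a^p = 1 for all a ∈ N, and the quotient ⟨Y⟩/N is abelian with b^q = 1 for all b ∈ ⟨Y⟩/N. -/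
/-!
Let `A = (ℤ/q)^m` with `m = n - 1`, let `H = C_p ≀ A` act on `Ω = C_p × A`, and `G = C_M^Ω ⋊ H`.
Since `H ∈ 𝒜_p𝒜_q` (base `C_p^A`, top `A`), so is every subgroup of a conjugate `H^u`,
`u ∈ C_M^Ω`. The generators are the conjugates `x_r = e_r^w` of the basis translations by the
indicator `w = pointInd` of `(1, 𝟙) ∈ Ω`, and the base elements `y₀, y₁` of `H` supported at `0`
and `𝟙`. If `y₁`, `y₀` or `x_j` is dropped, the others lie in `H^(w d)` for `d = 1`,
`layerInd⁻¹` or `negStripInd j`: `d` is fixed by the remaining translations and `w d` by the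
remaining `y`'s. Meanwhile `(x_1⋯x_m) y₀ (x_1⋯x_m)⁻¹ y₁⁻¹ = w (y₁ • w)⁻¹ ∈ C_M^Ω` takes the value
`1` at `(1, 𝟙)`, so its order is divisible by `M`; take `M = ℓ + 1`.
-/

/-- `K` belongs to the class `𝒜_p𝒜_q`. -/
def IsAbelianByAbelian (p q : ℕ) (K : Type*) [Group K] : Prop :=
  ∃ (N : Subgroup K) (_ : N.Normal), (∀ a b : N, a * b = b * a) ∧ (∀ a : N, a ^ p = 1) ∧
    (∀ x y : K ⧸ N, x * y = y * x) ∧ (∀ x : K ⧸ N, x ^ q = 1)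

section Criterion
variable {p q : ℕ} {K T : Type*} [Group K] [CommGroup T]

theorem isAbelianByAbelian_of_monoidHom (f : K →* T) (hT : ∀ t : T, t ^ q = 1)
    (hcomm : ∀ x ∈ f.ker, ∀ y ∈ f.ker, Commute x y) (hpow : ∀ x ∈ f.ker, x ^ p = 1) :
    IsAbelianByAbelian p q K := by
  refine ⟨f.ker, inferInstance, fun a b => Subtype.ext (hcomm a a.2 b b.2),
    fun a => Subtype.ext (hpow a a.2), fun x y => QuotientGroup.kerLift_injective f ?_,
    fun x => QuotientGroup.kerLift_injective f ?_⟩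
  · rw [map_mul, map_mul, mul_comm]
  · rw [map_pow, hT, map_one]

theorem isAbelianByAbelian_of_range_le {H G : Type*} [Group H] [Group G] {ι : K →* G}
    (hι : Function.Injective ι) {φ : H →* G} (hιφ : ι.range ≤ φ.range) (f : G →* T)
    (hT : ∀ t : T, t ^ q = 1) (hcomm : ∀ x ∈ (f.comp φ).ker, ∀ y ∈ (f.comp φ).ker, Commute x y)
    (hpow : ∀ x ∈ (f.comp φ).ker, x ^ p = 1) : IsAbelianByAbelian p q K := by
  have hker {x : K} (hx : x ∈ (f.comp ι).ker) : ∃ h ∈ (f.comp φ).ker, φ h = ι x := by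
    obtain ⟨h, hh⟩ := hιφ ⟨x, rfl⟩
    exact ⟨h, by simpa [hh] using hx, hh⟩
  refine isAbelianByAbelian_of_monoidHom (f.comp ι) hT (fun x hx y hy => hι ?_) fun x hx => hι ?_
  · obtain ⟨h₁, hh₁, e₁⟩ := hker hx
    obtain ⟨h₂, hh₂, e₂⟩ := hker hy
    rw [map_mul, map_mul, ← e₁, ← e₂, ← map_mul, ← map_mul, (hcomm h₁ hh₁ h₂ hh₂).eq]
  · obtain ⟨h, hh, e⟩ := hker hx
    rw [map_pow, ← e, ← map_pow, hpow h hh, map_one, map_one]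

end Criterion

namespace RegularWreathProduct

theorem commute_of_right_eq_one {D Q : Type*} [CommGroup D] [Group Q] {x y : D ≀ᵣ Q}
    (hx : x.right = 1) (hy : y.right = 1) : Commute x y := by
  ext k <;> simp [hx, hy, mul_comm]

theorem pow_of_right_eq_one {D Q : Type*} [Group D] [Group Q] {x : D ≀ᵣ Q}
    (hx : x.right = 1) (n : ℕ) : x ^ n = ⟨x.left ^ n, 1⟩ := by
  induction n with
  | zero => ext <;> simp
  | succ n ih => ext k <;> simp [pow_succ, ih, hx]

end RegularWreathProduct

theorem exists_finset_closure_eq_top_of_injective {G ι : Type*} [Group G] [Fintype ι]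
    {g : ι → G} (hg : Function.Injective g) :
    ∃ X : Finset (Subgroup.closure (Set.range g)), X.card = Fintype.card ι ∧
      Subgroup.closure (X : Set (Subgroup.closure (Set.range g))) = ⊤ ∧
      ∀ Y ⊂ X, ∃ i, (Subgroup.closure (Y : Set (Subgroup.closure (Set.range g)))).map
        (Subgroup.closure (Set.range g)).subtype ≤ Subgroup.closure (g '' {i}ᶜ) := by
  let g' : ι ↪ Subgroup.closure (Set.range g) :=
    ⟨fun i => ⟨g i, Subgroup.subset_closure ⟨i, rfl⟩⟩, fun i j h => hg (congrArg Subtype.val h)⟩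
  refine ⟨Finset.univ.map g', by simp, ?_, fun Y hY => ?_⟩
  · convert Subgroup.closure_closure_coe_preimage (k := Set.range g)
    ext x
    rw [Finset.mem_coe, Finset.mem_map]
    constructor
    · rintro ⟨i, -, rfl⟩
      exact ⟨i, rfl⟩
    · rintro ⟨i, hi⟩
      exact ⟨i, Finset.mem_univ _, Subtype.ext hi⟩
  · obtain ⟨_, hx, hxY⟩ := Finset.exists_of_ssubset hY
    obtain ⟨i, -, rfl⟩ := Finset.mem_map.1 hx
    refine ⟨i, (MonoidHom.map_closure _ _).trans_le (Subgroup.closure_mono ?_)⟩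
    rintro _ ⟨y, hy, rfl⟩
    obtain ⟨j, -, rfl⟩ := Finset.mem_map.1 (hY.subset hy)
    exact ⟨j, fun hji => hxY (by rwa [← show j = i from hji]), rfl⟩

theorem dvd_orderOf_of_apply_eq_ofAdd_one {M : ℕ} {ι : Type*} {f : ι → Multiplicative (ZMod M)}
    {i : ι} (hf : f i = Multiplicative.ofAdd 1) : M ∣ orderOf f := by
  simpa [hf, orderOf_ofAdd_eq_addOrderOf] using orderOf_map_dvd (Pi.evalMonoidHom _ i) f

namespace SemidirectProduct

section
variable {N G : Type*} [Group N] [Group G] {φ : G →* MulAut N}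

instance [Finite N] [Finite G] : Finite (N ⋊[φ] G) :=
  Finite.of_equiv _ equivProd.symm

theorem conj_inl_inr (u : N) (g : G) :
    (inl u * inr g * (inl u)⁻¹ : N ⋊[φ] G) = inl (u * (φ g u)⁻¹) * inr g := by
  ext <;> simp [mul_assoc]

theorem conj_inl_inr_of_fixed {u : N} {g : G} (h : φ g u = u) :
    (inl u * inr g * (inl u)⁻¹ : N ⋊[φ] G) = inr g := by
  simp [conj_inl_inr, h]

end

theorem conj_inl_mul_inr_of_fixed {N G : Type*} [CommGroup N] [Group G] {φ : G →* MulAut N}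
    (u : N) {d : N} {g : G} (h : φ g d = d) :
    (inl (u * d) * inr g * (inl (u * d))⁻¹ : N ⋊[φ] G) = inl u * inr g * (inl u)⁻¹ := by
  rw [conj_inl_inr, conj_inl_inr, map_mul (φ g), h, mul_inv, mul_mul_mul_comm, mul_inv_cancel,
    mul_one]

end SemidirectProduct

namespace WreathExample

open SemidirectProduct Multiplicative

variable (m p q M : ℕ)

abbrev Vec := Multiplicative (Fin m → ZMod q)
abbrev Inner := Multiplicative (ZMod p) ≀ᵣ Vec m q
abbrev Pt := Multiplicative (ZMod p) × Vec m q
abbrev Fn := Pt m p q → Multiplicative (ZMod M)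
abbrev Outer := Fn m p q M ⋊[mulAutArrow] Inner m p q

def ones : Vec m q := ofAdd 1

def baseSingle (z : Vec m q) : Inner m p q := ⟨Pi.mulSingle z (ofAdd 1), 1⟩

def pointInd : Fn m p q M := Pi.mulSingle (1, ones m q) (ofAdd 1)

def layerInd : Fn m p q M := fun ω => if ω.1 = 1 then ofAdd 1 else 1

def negStripInd (j : Fin m) : Fn m p q M :=
  fun ω => if ω.1 = 1 ∧ toAdd ω.2 j ≠ 0 then ofAdd (-1) else 1

variable {m p q M}

def conjInr (u : Fn m p q M) : Inner m p q →* Outer m p q M :=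
  (MulAut.conj (inl u)).toMonoidHom.comp inr

theorem conjInr_apply (u : Fn m p q M) (h : Inner m p q) :
    conjInr u h = inl u * inr h * (inl u)⁻¹ := rfl

theorem mulAutArrow_apply (h : Inner m p q) (f : Fn m p q M) (ω : Pt m p q) :
    mulAutArrow h f ω = f ((h.left ω.2)⁻¹ * ω.1, h.right⁻¹ * ω.2) := by
  show f (h⁻¹ • ω) = _
  simp

theorem mulAutArrow_inl_apply (v : Vec m q) (f : Fn m p q M) (ω : Pt m p q) :
    mulAutArrow (RegularWreathProduct.inl v : Inner m p q) f ω = f (ω.1, v⁻¹ * ω.2) := by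
  rw [mulAutArrow_apply]
  simp

theorem mulAutArrow_baseSingle_apply (z : Vec m q) (f : Fn m p q M) (ω : Pt m p q) :
    mulAutArrow (baseSingle m p q z) f ω =
      f (((Pi.mulSingle z (ofAdd (1 : ZMod p)) : Vec m q → _) ω.2)⁻¹ * ω.1, ω.2) := by
  rw [mulAutArrow_apply]
  simp [baseSingle]

theorem ones_ne_one [Fact (1 < q)] (hm : 0 < m) : ones m q ≠ 1 := by
  intro h
  have := congrFun (congrArg toAdd h) ⟨0, hm⟩
  simp [ones] at this

theorem mulAutArrow_baseSingle_one_pointInd [Fact (1 < q)] (hm : 0 < m) :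
    mulAutArrow (baseSingle m p q 1) (pointInd m p q M) = pointInd m p q M := by
  funext ⟨a, x⟩
  rw [mulAutArrow_baseSingle_apply]
  by_cases hx : x = 1
  · subst hx
    simp [pointInd, (ones_ne_one hm).symm]
  · simp [hx]

theorem mulAutArrow_baseSingle_ones_pointInd_mul_layerInd_inv :
    mulAutArrow (baseSingle m p q (ones m q)) (pointInd m p q M * (layerInd m p q M)⁻¹) =
      pointInd m p q M * (layerInd m p q M)⁻¹ := by
  funext ⟨a, x⟩
  rw [mulAutArrow_baseSingle_apply]
  by_cases hx : x = ones m q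
  · have hconst : ∀ a, (pointInd m p q M * (layerInd m p q M)⁻¹) (a, ones m q) = 1 := by
      intro a
      by_cases ha : a = 1 <;> simp [pointInd, layerInd, ha]
    simp [hx, hconst]
  · simp [hx]

theorem mulAutArrow_inl_layerInd (v : Vec m q) :
    mulAutArrow (RegularWreathProduct.inl v : Inner m p q) (layerInd m p q M) =
      layerInd m p q M := by
  funext ω
  rw [mulAutArrow_inl_apply]
  simp [layerInd]

theorem mulAutArrow_inl_single_negStripInd {r j : Fin m} (hrj : r ≠ j) :
    mulAutArrow (RegularWreathProduct.inl (ofAdd (Pi.single r 1)) : Inner m p q)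
      (negStripInd m p q M j) = negStripInd m p q M j := by
  funext ω
  rw [mulAutArrow_inl_apply]
  simp [negStripInd, hrj.symm]

theorem mulAutArrow_baseSingle_one_negStripInd (j : Fin m) :
    mulAutArrow (baseSingle m p q 1) (negStripInd m p q M j) = negStripInd m p q M j := by
  funext ⟨a, x⟩
  rw [mulAutArrow_baseSingle_apply]
  by_cases hx : x = 1
  · subst hx
    simp [negStripInd]
  · simp [hx]

theorem mulAutArrow_baseSingle_ones_pointInd_mul_negStripInd [Fact (1 < q)] (j : Fin m) :
    mulAutArrow (baseSingle m p q (ones m q)) (pointInd m p q M * negStripInd m p q M j) =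
      pointInd m p q M * negStripInd m p q M j := by
  funext ⟨a, x⟩
  rw [mulAutArrow_baseSingle_apply]
  by_cases hx : x = ones m q
  · have hconst : ∀ a, (pointInd m p q M * negStripInd m p q M j) (a, ones m q) = 1 := by
      intro a
      by_cases ha : a = 1 <;> simp [pointInd, negStripInd, ha, ones]
    simp [hx, hconst]
  · simp [hx]

theorem conjInr_of_fixed {u : Fn m p q M} {h : Inner m p q} (hu : mulAutArrow h u = u) :
    conjInr u h = inr h :=
  conj_inl_inr_of_fixed hu

theorem conjInr_mul_of_fixed (u : Fn m p q M) {d : Fn m p q M} {h : Inner m p q}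
    (hd : mulAutArrow h d = d) : conjInr (u * d) h = conjInr u h :=
  conj_inl_mul_inr_of_fixed u hd

variable (m p q M)

def gen : Fin m ⊕ Bool → Outer m p q M
  | .inl r => conjInr (pointInd m p q M) (RegularWreathProduct.inl (ofAdd (Pi.single r 1)))
  | .inr false => inr (baseSingle m p q 1)
  | .inr true => inr (baseSingle m p q (ones m q))

def conjugator : Fin m ⊕ Bool → Fn m p q M
  | .inl j => pointInd m p q M * negStripInd m p q M j
  | .inr false => pointInd m p q M * (layerInd m p q M)⁻¹
  | .inr true => pointInd m p q M

variable {m p q M}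

theorem gen_mem_range_conjInr_conjugator [Fact (1 < q)] (hm : 0 < m) {i j : Fin m ⊕ Bool}
    (hji : j ≠ i) : gen m p q M j ∈ (conjInr (conjugator m p q M i)).range := by
  have hy₀ := mulAutArrow_baseSingle_one_pointInd (p := p) (q := q) (M := M) hm
  rcases i with i | _ | _ <;> rcases j with j | _ | _
  · exact ⟨_, conjInr_mul_of_fixed _
      (mulAutArrow_inl_single_negStripInd fun h => hji (congrArg Sum.inl h))⟩
  · refine ⟨baseSingle m p q 1, conjInr_of_fixed ?_⟩
    rw [conjugator, map_mul, hy₀, mulAutArrow_baseSingle_one_negStripInd]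
  · exact ⟨_, conjInr_of_fixed (mulAutArrow_baseSingle_ones_pointInd_mul_negStripInd i)⟩
  · refine ⟨_, (conjInr_mul_of_fixed _ ?_)⟩
    rw [map_inv, mulAutArrow_inl_layerInd]
  · exact absurd rfl hji
  · exact ⟨_, conjInr_of_fixed mulAutArrow_baseSingle_ones_pointInd_mul_layerInd_inv⟩
  · exact ⟨_, rfl⟩
  · exact ⟨_, conjInr_of_fixed hy₀⟩
  · exact absurd rfl hji

def proj : Outer m p q M →* Vec m q :=
  RegularWreathProduct.rightHom.comp SemidirectProduct.rightHom

theorem proj_conjInr (u : Fn m p q M) (h : Inner m p q) : proj (conjInr u h) = h.right := by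
  simp [proj, conjInr_apply]

theorem proj_gen (i : Fin m ⊕ Bool) :
    proj (gen m p q M i) = Sum.elim (fun r => ofAdd (Pi.single r 1)) 1 i := by
  rcases i with r | _ | _
  · exact proj_conjInr _ _
  all_goals simp [gen, proj, baseSingle]

theorem baseSingle_injective [Fact (1 < p)] : Function.Injective (baseSingle m p q) := by
  intro z z' h
  by_contra hz
  have := congrFun (congrArg RegularWreathProduct.left h) z
  simp [baseSingle, hz] at this

theorem gen_injective [Fact (1 < p)] [Fact (1 < q)] (hm : 0 < m) :
    Function.Injective (gen m p q M) := by
  intro i j h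
  have hproj := congrFun (congrArg toAdd (congrArg proj h))
  simp only [proj_gen] at hproj
  rcases i with i | b <;> rcases j with j | b'
  · simpa [Pi.single_apply, eq_comm] using hproj i
  · simpa using hproj i
  · simpa using hproj j
  · cases b <;> cases b' <;>
      simp [gen, baseSingle_injective.eq_iff, ones_ne_one hm, (ones_ne_one hm).symm] at h ⊢

theorem inl_mul_baseSingle_mul_inl_inv (v z : Vec m q) :
    RegularWreathProduct.inl v * baseSingle m p q z * (RegularWreathProduct.inl v)⁻¹ =
      baseSingle m p q (v * z) := by
  ext x
  · simp [baseSingle, Pi.mulSingle_apply, inv_mul_eq_iff_eq_mul]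
  · simp [baseSingle]

theorem conjInr_inl_ones_mul_gen_mul_inv [Fact (1 < q)] (hm : 0 < m) :
    conjInr (pointInd m p q M) (RegularWreathProduct.inl (ones m q)) * gen m p q M (.inr false) *
      (conjInr (pointInd m p q M) (RegularWreathProduct.inl (ones m q)))⁻¹ =
    conjInr (pointInd m p q M) (baseSingle m p q (ones m q)) := by
  rw [gen, ← conjInr_of_fixed (mulAutArrow_baseSingle_one_pointInd hm), ← map_inv, ← map_mul,
    ← map_mul, inl_mul_baseSingle_mul_inl_inv, mul_one]

theorem conjInr_baseSingle_ones_mul_gen_inv :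
    conjInr (pointInd m p q M) (baseSingle m p q (ones m q)) * (gen m p q M (.inr true))⁻¹ =
      inl (pointInd m p q M *
        (mulAutArrow (baseSingle m p q (ones m q)) (pointInd m p q M))⁻¹) := by
  rw [conjInr_apply, conj_inl_inr, gen, mul_inv_cancel_right]

theorem pointInd_mul_inv_apply [Fact (1 < p)] :
    (pointInd m p q M * (mulAutArrow (baseSingle m p q (ones m q)) (pointInd m p q M))⁻¹)
      (1, ones m q) = ofAdd 1 := by
  rw [Pi.mul_apply, Pi.inv_apply, mulAutArrow_baseSingle_apply]
  simp [pointInd]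

theorem ones_mem_closure_range_single :
    ones m q ∈ Subgroup.closure (Set.range fun r => ofAdd (Pi.single r 1)) := by
  rw [ones, ← Finset.univ_sum_single (1 : Fin m → ZMod q), ofAdd_sum]
  exact Subgroup.prod_mem _ fun r _ => Subgroup.subset_closure ⟨r, rfl⟩

theorem conjInr_inl_ones_mem_closure_range_gen :
    conjInr (pointInd m p q M) (RegularWreathProduct.inl (ones m q)) ∈
      Subgroup.closure (Set.range (gen m p q M)) := by
  have := Subgroup.mem_map_of_mem ((conjInr (pointInd m p q M)).comp RegularWreathProduct.inl)
    ones_mem_closure_range_single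
  rw [MonoidHom.map_closure, ← Set.range_comp] at this
  exact Subgroup.closure_mono (Set.range_comp_subset_range Sum.inl _) this

theorem le_natCard_closure_range_gen [Fact (1 < p)] [Fact (1 < q)] [NeZero M] (hm : 0 < m) :
    M ≤ Nat.card (Subgroup.closure (Set.range (gen m p q M))) := by
  set P := Subgroup.closure (Set.range (gen m p q M))
  set t := conjInr (pointInd m p q M) (RegularWreathProduct.inl (ones m q))
  have hgen (i) : gen m p q M i ∈ P := Subgroup.subset_closure ⟨i, rfl⟩
  have ht : t ∈ P := conjInr_inl_ones_mem_closure_range_gen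
  set σ := pointInd m p q M * (mulAutArrow (baseSingle m p q (ones m q)) (pointInd m p q M))⁻¹
  have hσ : inl σ ∈ P := by
    rw [← conjInr_baseSingle_ones_mul_gen_inv, ← conjInr_inl_ones_mul_gen_mul_inv hm]
    exact mul_mem (mul_mem (mul_mem ht (hgen _)) (inv_mem ht)) (inv_mem (hgen _))
  have hM : M ∣ orderOf (⟨inl σ, hσ⟩ : P) := by
    rw [Subgroup.orderOf_mk, orderOf_injective inl inl_injective]
    exact dvd_orderOf_of_apply_eq_ofAdd_one pointInd_mul_inv_apply
  exact Nat.le_of_dvd Nat.card_pos (hM.trans (orderOf_dvd_natCard _))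

theorem isAbelianByAbelian_of_range_le_closure [Fact (1 < q)] (hm : 0 < m) {K : Type*} [Group K]
    {ι : K →* Outer m p q M} (hι : Function.Injective ι) (i : Fin m ⊕ Bool)
    (hK : ι.range ≤ Subgroup.closure (gen m p q M '' {i}ᶜ)) : IsAbelianByAbelian p q K := by
  have hrange :
      Subgroup.closure (gen m p q M '' {i}ᶜ) ≤ (conjInr (conjugator m p q M i)).range := by
    rw [Subgroup.closure_le]
    rintro _ ⟨j, hj, rfl⟩
    exact gen_mem_range_conjInr_conjugator hm hj
  have hker {h : Inner m p q} (hh : h ∈ (proj.comp (conjInr (conjugator m p q M i))).ker) :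
      h.right = 1 := by
    simpa [proj_conjInr] using hh
  refine isAbelianByAbelian_of_range_le hι (hK.trans hrange) proj (fun t => ?_)
    (fun x hx y hy => RegularWreathProduct.commute_of_right_eq_one (hker hx) (hker hy))
    (fun x hx => ?_)
  · apply toAdd.injective
    ext
    simp
  · rw [RegularWreathProduct.pow_of_right_eq_one (hker hx)]
    ext k
    · apply toAdd.injective
      simp
    · rfl

end WreathExample

open WreathExample in
/-- For every `n ≥ 2`, all primes `p, q`, and every `ℓ`, there is a finite
group `P` with `|P| ≥ ℓ` and a generating set `X ⊆ P` with `|X| = n + 1` such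
that for every proper subset `Y ⊊ X`, the subgroup `⟨Y⟩` has an abelian normal
subgroup `N` of exponent dividing `p` with `⟨Y⟩ / N` abelian of exponent
dividing `q`. -/
theorem stmt_10 (n : ℕ) (hn : 2 ≤ n) (p q : ℕ) (hp : p.Prime) (hq : q.Prime)
    (ℓ : ℕ) :
    ∃ (P : Type) (_ : Group P) (_ : Fintype P),
      ℓ ≤ Fintype.card P ∧
      ∃ X : Finset P, X.card = n + 1 ∧
        Subgroup.closure (X : Set P) = ⊤ ∧
        ∀ Y : Finset P, Y ⊂ X →
          ∃ (N : Subgroup (Subgroup.closure (Y : Set P))) (_ : N.Normal),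
            (∀ a b : N, a * b = b * a) ∧
            (∀ a : N, a ^ p = 1) ∧
            (∀ x y : Subgroup.closure (Y : Set P) ⧸ N, x * y = y * x) ∧
            (∀ x : Subgroup.closure (Y : Set P) ⧸ N, x ^ q = 1) := by
  have : Fact (1 < p) := ⟨hp.one_lt⟩
  have : Fact (1 < q) := ⟨hq.one_lt⟩
  obtain ⟨m, rfl⟩ : ∃ m, n = m + 1 := ⟨n - 1, by omega⟩
  have hm : 0 < m := by omega
  let P := Subgroup.closure (Set.range (gen m p q (ℓ + 1)))
  let : Fintype P := Fintype.ofFinite P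
  obtain ⟨X, hXcard, hXtop, hXsub⟩ := exists_finset_closure_eq_top_of_injective
    (g := gen m p q (ℓ + 1)) (gen_injective hm)
  refine ⟨P, inferInstance, inferInstance, ?_, X, ?_, hXtop, fun Y hY => ?_⟩
  · rw [← Nat.card_eq_fintype_card]
    exact (Nat.le_succ ℓ).trans (le_natCard_closure_range_gen hm)
  · simp [hXcard]
  · obtain ⟨i, hi⟩ := hXsub Y hY
    refine isAbelianByAbelian_of_range_le_closure hm
      (ι := P.subtype.comp (Subgroup.closure (Y : Set P)).subtype)
      (P.subtype_injective.comp (Subgroup.subtype_injective _)) i ?_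
    rwa [MonoidHom.range_comp, Subgroup.range_subtype]
end

section
/- Let G be a group acting faithfully on a set S, let H be a group satisfying every group identity of G, and let r ≥ 1. Then every 2-sorted identity [w]y ≈ [w′]y that holds in the 2-sorted algebra (G, S; α) holds in L(H, r) = (H, Fin r × H; m), where m(h, (i, x)) = (i, h·x). Explicitly: for every k and all words w, w′ (finite lists of variable indices from Fin k), if for all g : Fin k → G and all t ∈ S one has g(i₁)•(g(i₂)•(⋯•(g(i_m)•t)⋯)) computed along w equal to the corresponding value along w′, then for all h : Fin k → H, all j ∈ Fin r and all x ∈ H, the analogous folded products h(i₁)·(h(i₂)·(⋯·(h(i_m)·x)⋯)) along w and w′ are equal. -/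
/-! A 2-sorted term `[w]y` acts on `y` through the product of the letters of `w`. So an identity
`[w]y ≈ [w']y` holds in a faithful action of `G` exactly when `w` and `w'` have the same product under
every assignment into `G`, i.e. when `w w'⁻¹` is a group identity of `G`. That identity passes to `H`,
and in `L(H, r)` the term `[w](j, x)` is `(j, w(h) x)`, so the identity holds there too. -/

/-- Evaluation of the 2-sorted term `[w]y` in a 2-sorted algebra `(A₁, A₂; s)`:
for `w = x_{i₁} ⋯ x_{i_m}`, an assignment `g` of sort-1 variables and a value
`y` of sort 2, it computes `s(g i₁, s(g i₂, …, s(g i_m, y)…))`. -/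
def evalWord {ι A₁ A₂ : Type*} (s : A₁ → A₂ → A₂) (g : ι → A₁)
    (w : List ι) (y : A₂) : A₂ :=
  w.foldr (fun i acc => s (g i) acc) y

section EvalWord

variable {ι M : Type*} [Monoid M]

lemma evalWord_smul {S : Type*} [MulAction M S] (g : ι → M) (w : List ι) (t : S) :
    evalWord (fun (a : M) (b : S) => a • b) g w t = (w.map g).prod • t := by
  induction w with
  | nil => simp [evalWord]
  | cons i w ih => simp_all [evalWord, mul_smul]

lemma evalWord_mul_snd {J : Type*} (h : ι → M) (w : List ι) (j : J) (x : M) :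
    evalWord (fun (a : M) (b : J × M) => (b.1, a * b.2)) h w (j, x) = (j, (w.map h).prod * x) := by
  induction w with
  | nil => simp [evalWord]
  | cons i w ih => simp_all [evalWord, mul_assoc]

lemma prod_map_eq_of_evalWord_smul_eq {S : Type*} [MulAction M S] [FaithfulSMul M S]
    {g : ι → M} {w w' : List ι}
    (hww' : ∀ t : S, evalWord (fun (a : M) (b : S) => a • b) g w t =
      evalWord (fun (a : M) (b : S) => a • b) g w' t) :
    (w.map g).prod = (w'.map g).prod :=
  FaithfulSMul.eq_of_smul_eq_smul (α := S) fun t => by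
    simpa only [evalWord_smul] using hww' t

end EvalWord

lemma FreeGroup.lift_prod_map_of {ι G : Type*} [Group G] (g : ι → G) (w : List ι) :
    FreeGroup.lift g (w.map FreeGroup.of).prod = (w.map g).prod := by
  simp [map_list_prod, Function.comp_def]

theorem stmt_11_general (G : Type*) [Group G] (S : Type*) [MulAction G S]
    [FaithfulSMul G S] (H : Type*) [Group H]
    (hH : ∀ (k : ℕ) (u : FreeGroup (Fin k)),
      (∀ g : Fin k → G, FreeGroup.lift g u = 1) →
      ∀ h : Fin k → H, FreeGroup.lift h u = 1)
    (r : ℕ) :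
    ∀ (k : ℕ) (w w' : List (Fin k)),
      (∀ (g : Fin k → G) (t : S),
        evalWord (fun (a : G) (b : S) => a • b) g w t =
        evalWord (fun (a : G) (b : S) => a • b) g w' t) →
      ∀ (h : Fin k → H) (j : Fin r) (x : H),
        evalWord (fun (a : H) (b : Fin r × H) => (b.1, a * b.2)) h w (j, x) =
        evalWord (fun (a : H) (b : Fin r × H) => (b.1, a * b.2)) h w' (j, x) := by
  intro k w w' hww' h j x
  let u : FreeGroup (Fin k) := (w.map .of).prod * ((w'.map .of).prod)⁻¹
  have hu_identity (g : Fin k → G) : FreeGroup.lift g u = 1 := by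
    simp only [u, map_mul, map_inv, FreeGroup.lift_prod_map_of, mul_inv_eq_one]
    exact prod_map_eq_of_evalWord_smul_eq (hww' g)
  have hprod : (w.map h).prod = (w'.map h).prod := by
    simpa only [u, map_mul, map_inv, FreeGroup.lift_prod_map_of, mul_inv_eq_one] using
      hH k u hu_identity h
  rw [evalWord_mul_snd, evalWord_mul_snd, hprod]

/-- Let `G` act faithfully on `S`, let `H` be a group satisfying every group
identity of `G`, and let `r ≥ 1`.  Then every 2-sorted identity
`[w]y ≈ [w']y` holding in `(G, S; •)` holds in
`L(H, r) = (H, Fin r × H; m)` where `m h (i, x) = (i, h * x)`. -/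
theorem stmt_11 (G : Type*) [Group G] (S : Type*) [MulAction G S]
    [FaithfulSMul G S] (H : Type*) [Group H]
    (hH : ∀ (k : ℕ) (u : FreeGroup (Fin k)),
      (∀ g : Fin k → G, FreeGroup.lift g u = 1) →
      ∀ h : Fin k → H, FreeGroup.lift h u = 1)
    (r : ℕ) (hr : 1 ≤ r) :
    ∀ (k : ℕ) (w w' : List (Fin k)),
      (∀ (g : Fin k → G) (t : S),
        evalWord (fun (a : G) (b : S) => a • b) g w t =
        evalWord (fun (a : G) (b : S) => a • b) g w' t) →
      ∀ (h : Fin k → H) (j : Fin r) (x : H),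
        evalWord (fun (a : H) (b : Fin r × H) => (b.1, a * b.2)) h w (j, x) =
        evalWord (fun (a : H) (b : Fin r × H) => (b.1, a * b.2)) h w' (j, x) :=
  stmt_11_general G S H hH r
end

section
/- Let C be a set equipped with operations d : C × C → C and f : C → C satisfying d(x,x) = x, d(d(x,y), d(z,w)) = d(x,w), and d(f(x), y) = d(x,y) for all x, y, z, w ∈ C. Define relations E₁ and E₂ on C by: a E₁ b iff there exists c ∈ C with d(a,c) = d(b,c), and a E₂ b iff there exists c ∈ C with d(c,a) = d(c,b). Then: (i) E₁ and E₂ are equivalence relations; (ii) if a E₁ a′ and b E₂ b′ then d(a,b) = d(a′,b′); and (iii) the map C → C/E₁ × C/E₂ sending c to (c/E₁, c/E₂) is a bijection, whose inverse sends (a/E₁, b/E₂) to d(a,b). -/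
/-! With idempotence, the second law makes `d` a rectangular band: `d (d a b) c = d a c` and
`d a (d b c) = d a c`. A single witness of `a E₁ b` therefore gives `d a = d b` outright, and
dually for `E₂`, so `c ↦ (c/E₁, c/E₂)` is the decomposition of the band into rows and columns,
with `d a b` the element in the row of `a` and the column of `b`. -/

namespace RectangularBand

variable {C : Type*} {d : C → C → C}

def LeftEquiv (d : C → C → C) (a b : C) : Prop := ∃ c, d a c = d b c

def RightEquiv (d : C → C → C) (a b : C) : Prop := ∃ c, d c a = d c b

section

variable (h2 : ∀ x y z w, d (d x y) (d z w) = d x w)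
include h2

theorem LeftEquiv.d_eq {a b : C} (h : LeftEquiv d a b) (y : C) : d a y = d b y := by
  obtain ⟨c, hc⟩ := h
  rw [← h2 a c c y, hc, h2]

theorem RightEquiv.d_eq {a b : C} (h : RightEquiv d a b) (x : C) : d x a = d x b := by
  obtain ⟨c, hc⟩ := h
  rw [← h2 x c c a, hc, h2]

theorem equivalence_leftEquiv : Equivalence (LeftEquiv d) where
  refl a := ⟨a, rfl⟩
  symm {a _} h := ⟨a, (h.d_eq h2 a).symm⟩
  trans {a _ _} hab hbc := ⟨a, (hab.d_eq h2 a).trans (hbc.d_eq h2 a)⟩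

theorem equivalence_rightEquiv : Equivalence (RightEquiv d) where
  refl a := ⟨a, rfl⟩
  symm {a _} h := ⟨a, (h.d_eq h2 a).symm⟩
  trans {a _ _} hab hbc := ⟨a, (hab.d_eq h2 a).trans (hbc.d_eq h2 a)⟩

theorem d_congr {a a' b b' : C} (ha : LeftEquiv d a a') (hb : RightEquiv d b b') :
    d a b = d a' b' :=
  (ha.d_eq h2 b).trans (hb.d_eq h2 a')

theorem leftEquiv_of_quot_eq {a b : C} (h : Quot.mk (LeftEquiv d) a = Quot.mk (LeftEquiv d) b) :
    LeftEquiv d a b :=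
  (equivalence_leftEquiv h2).eqvGen_iff.mp (Quot.eqvGen_exact h)

theorem rightEquiv_of_quot_eq {a b : C}
    (h : Quot.mk (RightEquiv d) a = Quot.mk (RightEquiv d) b) : RightEquiv d a b :=
  (equivalence_rightEquiv h2).eqvGen_iff.mp (Quot.eqvGen_exact h)

variable (h1 : ∀ x, d x x = x)
include h1

theorem leftEquiv_d (a b : C) : LeftEquiv d (d a b) a :=
  ⟨b, by rw [← h1 b, h2, h1]⟩

theorem rightEquiv_d (a b : C) : RightEquiv d (d a b) b :=
  ⟨a, by rw [← h1 a, h2, h1]⟩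

theorem eq_of_leftEquiv_of_rightEquiv {a b : C} (hl : LeftEquiv d a b)
    (hr : RightEquiv d a b) : a = b :=
  calc a = d a a := (h1 a).symm
    _ = d b b := d_congr h2 hl hr
    _ = b := h1 b

theorem quot_mk_d (a b : C) :
    (Quot.mk (LeftEquiv d) (d a b), Quot.mk (RightEquiv d) (d a b)) =
      (Quot.mk (LeftEquiv d) a, Quot.mk (RightEquiv d) b) :=
  Prod.ext (Quot.sound (leftEquiv_d h2 h1 a b)) (Quot.sound (rightEquiv_d h2 h1 a b))

theorem bijective_quot_mk_prod :
    Function.Bijective fun x : C => (Quot.mk (LeftEquiv d) x, Quot.mk (RightEquiv d) x) := by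
  refine ⟨fun a b hab => ?_, ?_⟩
  · obtain ⟨hl, hr⟩ := Prod.mk.inj hab
    exact eq_of_leftEquiv_of_rightEquiv h2 h1 (leftEquiv_of_quot_eq h2 hl)
      (rightEquiv_of_quot_eq h2 hr)
  · rintro ⟨⟨a⟩, ⟨b⟩⟩
    exact ⟨d a b, quot_mk_d h2 h1 a b⟩

end

end RectangularBand

open RectangularBand in
theorem stmt_13_general (C : Type*) (d : C → C → C)
    (h1 : ∀ x, d x x = x)
    (h2 : ∀ x y z w, d (d x y) (d z w) = d x w) :
    Equivalence (fun a b : C => ∃ c, d a c = d b c) ∧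
    Equivalence (fun a b : C => ∃ c, d c a = d c b) ∧
    (∀ a a' b b' : C, (∃ c, d a c = d a' c) → (∃ c, d c b = d c b') →
      d a b = d a' b') ∧
    Function.Bijective
      (fun x : C =>
        (Quot.mk (fun a b : C => ∃ c, d a c = d b c) x,
         Quot.mk (fun a b : C => ∃ c, d c a = d c b) x)) ∧
    (∀ a b : C,
      (Quot.mk (fun a b : C => ∃ c, d a c = d b c) (d a b),
       Quot.mk (fun a b : C => ∃ c, d c a = d c b) (d a b)) =
      (Quot.mk (fun a b : C => ∃ c, d a c = d b c) a,
       Quot.mk (fun a b : C => ∃ c, d c a = d c b) b)) :=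
  ⟨equivalence_leftEquiv h2, equivalence_rightEquiv h2, fun _ _ _ _ => d_congr h2,
    bijective_quot_mk_prod h2 h1, quot_mk_d h2 h1⟩

/-- Let `(C; d, f)` satisfy `d(x,x) = x`, `d(d(x,y),d(z,w)) = d(x,w)` and
`d(f(x),y) = d(x,y)`.  Define `a E₁ b ↔ ∃ c, d(a,c) = d(b,c)` and
`a E₂ b ↔ ∃ c, d(c,a) = d(c,b)`.  Then (i) `E₁` and `E₂` are equivalence
relations; (ii) if `a E₁ a'` and `b E₂ b'` then `d(a,b) = d(a',b')`;
(iii) the map `c ↦ (c/E₁, c/E₂)` is a bijection `C → C/E₁ × C/E₂`, whose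
inverse sends `(a/E₁, b/E₂)` to `d(a,b)`. -/
theorem stmt_13 (C : Type*) (d : C → C → C) (f : C → C)
    (h1 : ∀ x, d x x = x)
    (h2 : ∀ x y z w, d (d x y) (d z w) = d x w)
    (h3 : ∀ x y, d (f x) y = d x y) :
    Equivalence (fun a b : C => ∃ c, d a c = d b c) ∧
    Equivalence (fun a b : C => ∃ c, d c a = d c b) ∧
    (∀ a a' b b' : C, (∃ c, d a c = d a' c) → (∃ c, d c b = d c b') →
      d a b = d a' b') ∧
    Function.Bijective
      (fun x : C =>
        (Quot.mk (fun a b : C => ∃ c, d a c = d b c) x,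
         Quot.mk (fun a b : C => ∃ c, d c a = d c b) x)) ∧
    (∀ a b : C,
      (Quot.mk (fun a b : C => ∃ c, d a c = d b c) (d a b),
       Quot.mk (fun a b : C => ∃ c, d c a = d c b) (d a b)) =
      (Quot.mk (fun a b : C => ∃ c, d a c = d b c) a,
       Quot.mk (fun a b : C => ∃ c, d c a = d c b) b)) :=
  stmt_13_general C d h1 h2
end

section
/- Let A = (A₁, A₂; s) and B = (B₁, B₂; t) be 2-sorted algebras (s : A₁ × A₂ → A₂, t : B₁ × B₂ → B₂) with A₁, A₂, B₁, B₂ all nonempty. Form A⁰ = (A₁ ∪ {0}, A₂ ∪ {0}; s⁰) where s⁰(a,b) = s(a,b) if a ∈ A₁ and b ∈ A₂, and s⁰(a,b) = 0 otherwise; similarly form B⁰. If every identity [w]y ≈ [w′]y that holds in A also holds in B, then every identity [w]y ≈ [w′]y that holds in A⁰ also holds in B⁰. -/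
/-- The operation `s⁰` of the 2-sorted algebra `A⁰ = (A₁ ∪ {0}, A₂ ∪ {0}; s⁰)`
obtained from `(A₁, A₂; s)` by adjoining a fresh absorbing element `0`
(modelled by `none`) to each sort. -/
def zeroExt {A₁ A₂ : Type*} (s : A₁ → A₂ → A₂) :
    Option A₁ → Option A₂ → Option A₂
  | some a, some b => some (s a b)
  | _, _ => none

lemma zeroExt_none_right {A₁ A₂ : Type*} (s : A₁ → A₂ → A₂) (x : Option A₁) :
    zeroExt s x none = none := by cases x <;> rfl

lemma evalWord_zeroExt_none {ι A₁ A₂ : Type*} (s : A₁ → A₂ → A₂)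
    (g : ι → Option A₁) (w : List ι) :
    evalWord (zeroExt s) g w none = none := by
  induction w with
  | nil => rfl
  | cons a l ih => simp [evalWord, List.foldr] at ih ⊢; rw [ih, zeroExt_none_right]

lemma evalWord_zeroExt_mem_none {ι A₁ A₂ : Type*} (s : A₁ → A₂ → A₂)
    (g : ι → Option A₁) (w : List ι) (y : Option A₂) (i : ι)
    (hi : i ∈ w) (hgi : g i = none) :
    evalWord (zeroExt s) g w y = none := by
  induction w with
  | nil => simp at hi
  | cons a l ih =>
    rcases List.mem_cons.mp hi with h1 | h2
    · subst h1
      show zeroExt s (g i) _ = none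
      rw [hgi]; rfl
    · show zeroExt s (g a) (evalWord (zeroExt s) g l y) = none
      rw [ih h2, zeroExt_none_right]

lemma evalWord_zeroExt_some {ι A₁ A₂ : Type*} (s : A₁ → A₂ → A₂)
    (g : ι → Option A₁) (w : List ι) (y : A₂) (d : A₁)
    (hg : ∀ i ∈ w, (g i).isSome) :
    evalWord (zeroExt s) g w (some y) =
      some (evalWord s (fun i => (g i).getD d) w y) := by
  induction w with
  | nil => rfl
  | cons a l ih =>
    have ha : (g a).isSome := hg a List.mem_cons_self
    show zeroExt s (g a) (evalWord (zeroExt s) g l (some y)) = _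
    rw [ih (fun i hi => hg i (List.mem_cons_of_mem a hi))]
    obtain ⟨x, hx⟩ := Option.isSome_iff_exists.mp ha
    rw [hx]
    show some (s x _) = _
    show _ = some (s ((g a).getD d) _)
    rw [hx]
    rfl

/-- Let `A = (A₁, A₂; s)` and `B = (B₁, B₂; t)` be 2-sorted algebras with all
sorts nonempty.  If every identity `[w]y ≈ [w']y` holding in `A` also holds in
`B`, then every identity `[w]y ≈ [w']y` holding in `A⁰` also holds in `B⁰`. -/
theorem stmt_18 (A₁ A₂ B₁ B₂ : Type*)
    [Nonempty A₁] [Nonempty A₂] [Nonempty B₁] [Nonempty B₂]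
    (s : A₁ → A₂ → A₂) (t : B₁ → B₂ → B₂)
    (h : ∀ (k : ℕ) (w w' : List (Fin k)),
      (∀ (g : Fin k → A₁) (y : A₂), evalWord s g w y = evalWord s g w' y) →
      ∀ (g : Fin k → B₁) (y : B₂), evalWord t g w y = evalWord t g w' y) :
    ∀ (k : ℕ) (w w' : List (Fin k)),
      (∀ (g : Fin k → Option A₁) (y : Option A₂),
        evalWord (zeroExt s) g w y = evalWord (zeroExt s) g w' y) →
      ∀ (g : Fin k → Option B₁) (y : Option B₂),
        evalWord (zeroExt t) g w y = evalWord (zeroExt t) g w' y := by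
  intro k w w' hA g y
  obtain ⟨a₁⟩ := ‹Nonempty A₁›
  obtain ⟨a₂⟩ := ‹Nonempty A₂›
  obtain ⟨b₁⟩ := ‹Nonempty B₁›
  -- identity holds in A
  have hAid : ∀ (g : Fin k → A₁) (y : A₂), evalWord s g w y = evalWord s g w' y := by
    intro g' y'
    have := hA (fun i => some (g' i)) (some y')
    rw [evalWord_zeroExt_some s _ w y' a₁ (by simp),
        evalWord_zeroExt_some s _ w' y' a₁ (by simp)] at this
    simpa using this
  -- w and w' have the same members
  have hmem : ∀ i : Fin k, i ∈ w ↔ i ∈ w' := by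
    intro i
    constructor <;> intro hi <;> by_contra hni
    · have h1 := hA (fun j => if j = i then none else some a₁) (some a₂)
      rw [evalWord_zeroExt_mem_none s _ w _ i hi (by simp),
          evalWord_zeroExt_some s _ w' a₂ a₁
            (fun j hj => by rw [if_neg (fun hji : j = i => hni (hji ▸ hj))]; rfl)] at h1
      cases h1
    · have h1 := hA (fun j => if j = i then none else some a₁) (some a₂)
      rw [evalWord_zeroExt_mem_none s _ w' _ i hi (by simp),
          evalWord_zeroExt_some s _ w a₂ a₁
            (fun j hj => by rw [if_neg (fun hji : j = i => hni (hji ▸ hj))]; rfl)] at h1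
      cases h1
  -- now prove in B⁰
  cases y with
  | none => rw [evalWord_zeroExt_none, evalWord_zeroExt_none]
  | some y0 =>
    by_cases hall : ∀ i ∈ w, (g i).isSome
    · have hall' : ∀ i ∈ w', (g i).isSome := fun i hi => hall i ((hmem i).mpr hi)
      rw [evalWord_zeroExt_some t g w y0 b₁ hall,
          evalWord_zeroExt_some t g w' y0 b₁ hall',
          h k w w' hAid]
    · push_neg at hall
      obtain ⟨i, hi, hgi⟩ := hall
      rw [evalWord_zeroExt_mem_none t g w _ i hi (Option.not_isSome_iff_eq_none.mp hgi),
          evalWord_zeroExt_mem_none t g w' _ i ((hmem i).mp hi)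
            (Option.not_isSome_iff_eq_none.mp hgi)]
end

section
/- Let G be a group acting on a nonempty set S, let G⁰ = G ∪ {0} and S⁰ = S ∪ {0} with the extended action α⁰(g,t) = g•t for g ∈ G, t ∈ S and α⁰(x,y) = 0 if x = 0 or y = 0. If the identity [w]y ≈ [w′]y holds in the 2-sorted algebra (G⁰, S⁰; α⁰), then the words w and w′ contain exactly the same set of variables. -/
/-!
The absorbing `0` detects variables: evaluating `[w]y` at a nonzero `y` gives `0` exactly
when some variable of `w` is sent to `0`. Sending the single variable `xᵢ` to `0` and all
others to `1`, the two sides of the identity are `0` exactly when `xᵢ` occurs in `w`,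
resp. in `w'`.
-/

section ZeroExt

variable {ι A₁ A₂ : Type*} (s : A₁ → A₂ → A₂)

@[simp]
theorem evalWord_cons (g : ι → A₁) (i : ι) (w : List ι) (y : A₂) :
    evalWord s g (i :: w) y = s (g i) (evalWord s g w y) :=
  rfl

@[simp]
theorem zeroExt_eq_none_iff (a : Option A₁) (b : Option A₂) :
    zeroExt s a b = none ↔ a = none ∨ b = none := by
  cases a <;> cases b <;> simp [zeroExt]

theorem evalWord_zeroExt_some_eq_none_iff (g : ι → Option A₁) (w : List ι) (y : A₂) :
    evalWord (zeroExt s) g w (some y) = none ↔ ∃ i ∈ w, g i = none := by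
  induction w with
  | nil => simp [evalWord]
  | cons a w ih => simp [ih]

end ZeroExt

/-- Let a group `G` act on a nonempty set `S`, and let `(G⁰, S⁰; α⁰)` be the
2-sorted algebra obtained by adjoining a fresh absorbing `0` to each sort.
If the identity `[w]y ≈ [w']y` holds in `(G⁰, S⁰; α⁰)`, then the words `w`
and `w'` contain exactly the same variables. -/
theorem stmt_19 (G : Type*) [Group G] (S : Type*) [Nonempty S] [MulAction G S]
    (k : ℕ) (w w' : List (Fin k))
    (h : ∀ (g : Fin k → Option G) (y : Option S),
      evalWord (zeroExt (fun (a : G) (b : S) => a • b)) g w y =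
      evalWord (zeroExt (fun (a : G) (b : S) => a • b)) g w' y) :
    ∀ i : Fin k, i ∈ w ↔ i ∈ w' := by
  intro i
  let g : Fin k → Option G := Function.update (fun _ => some 1) i none
  have mem_iff (v : List (Fin k)) : i ∈ v ↔ ∃ j ∈ v, g j = none := by
    simp [g, Function.update_apply]
  rw [mem_iff, mem_iff, ← evalWord_zeroExt_some_eq_none_iff,
    ← evalWord_zeroExt_some_eq_none_iff, h g (some (Classical.arbitrary S))]
end
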